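/- arXiv:2001.07033 — 7 statements merged into one kernel-verified Lean document; each statement's English description precedes it below -/
import Mathlib

section
/- Let $P_0$ be a probability measure on $[0,1]$ with positive mean, let $Q$ be a probability measure on $[0,1]$, and let $(b_n)_{n\ge 1}$ be a sequence in $[0,1)$. Define recursively $P_n(dx) = (1-b_n)\frac{x P_{n-1}(dx)}{\int y P_{n-1}(dy)} + b_n Q(dx)$ (assuming each $P_{n-1}$ has positive mean so the recursion is well defined). Then for every $n \ge 1$, $P_n(dx) = \Big(\prod_{l=0}^{n-1}\frac{1-b_{l+1}}{\int y P_l(dy)}\Big) x^n P_0(dx) + \sum_{j=1}^n \Big(\prod_{l=j}^{n-1}\frac{1-b_{l+1}}{\int y P_l(dy)}\Big) b_j m_{n-j} Q^{n-j}(dx)$, where $m_k = \int x^k Q(dx)$ and $Q^k(dx) = x^k Q(dx)/m_k$. -/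
/-!
With `a l = (1 - b (l + 1)) / ∫ y ∂P l`, the recursion reads
`P (n + 1) = a n • x P n + b (n + 1) • Q`, which is linear in `P n`. Unrolling it, each earlier
term is multiplied by `x` once per later step, and `k` multiplications by `x` amount to the density
`x ^ k`; finally `m_k Q^k = x ^ k Q`. Densities are taken as `ENNReal.ofReal x ^ k`, which composes
without any sign condition; the support in `[0, 1]` is only needed to identify it with
`ENNReal.ofReal (x ^ k)`.
-/

open MeasureTheory Set

open scoped ENNReal

namespace MeasureTheory

variable {α : Type*} [MeasurableSpace α]

lemma withDensity_finset_sum {ι : Type*} (s : Finset ι) (μ : ι → Measure α) (f : α → ℝ≥0∞) :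
    (∑ i ∈ s, μ i).withDensity f = ∑ i ∈ s, (μ i).withDensity f := by
  classical
  induction s using Finset.induction_on with
  | empty => simp
  | insert i s hi ih => rw [Finset.sum_insert hi, Finset.sum_insert hi, withDensity_add_measure, ih]

lemma withDensity_pow_withDensity {g : α → ℝ≥0∞} (hg : Measurable g) (μ : Measure α) (k : ℕ) :
    (μ.withDensity (g ^ k)).withDensity g = μ.withDensity (g ^ (k + 1)) := by
  rw [← withDensity_mul _ (show Measurable (g ^ k) from hg.pow_const k) hg, pow_succ]

theorem eq_of_withDensity_recursion {g : α → ℝ≥0∞} (hg : Measurable g) {μ : ℕ → Measure α}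
    {ν : Measure α} {a c : ℕ → ℝ≥0∞}
    (hrec : ∀ n, μ (n + 1) = a n • (μ n).withDensity g + c (n + 1) • ν) (n : ℕ) :
    μ n = (∏ l ∈ Finset.range n, a l) • (μ 0).withDensity (g ^ n)
      + ∑ j ∈ Finset.Icc 1 n,
          ((∏ l ∈ Finset.Ico j n, a l) * c j) • ν.withDensity (g ^ (n - j)) := by
  induction n with
  | zero => simp
  | succ n ih =>
    have hlast : ((∏ l ∈ Finset.Ico (n + 1) (n + 1), a l) * c (n + 1)) •
        ν.withDensity (g ^ (n + 1 - (n + 1))) = c (n + 1) • ν := by simp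
    have hsum : ∀ j ∈ Finset.Icc 1 n, a n •
        (((∏ l ∈ Finset.Ico j n, a l) * c j) • ν.withDensity (g ^ (n - j))).withDensity g
        = ((∏ l ∈ Finset.Ico j (n + 1), a l) * c j) • ν.withDensity (g ^ (n + 1 - j)) := by
      intro j hj
      have hjn : j ≤ n := (Finset.mem_Icc.1 hj).2
      rw [withDensity_smul_measure, withDensity_pow_withDensity hg, smul_smul,
        Finset.prod_Ico_succ_top hjn, Nat.sub_add_comm hjn]
      ring_nf
    rw [hrec, ih, withDensity_add_measure, withDensity_finset_sum, withDensity_smul_measure,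
      withDensity_pow_withDensity hg, smul_add, Finset.smul_sum, Finset.sum_congr rfl hsum,
      Finset.sum_Icc_succ_top (by omega), hlast, smul_smul, Finset.prod_range_succ, mul_comm (a _)]
    abel

lemma withDensity_ofReal_mul_pow {μ : Measure ℝ} (hμ : ∀ᵐ x ∂μ, 0 ≤ x) {c : ℝ} (hc : 0 ≤ c)
    (k : ℕ) :
    μ.withDensity (fun x => ENNReal.ofReal (c * x ^ k))
      = ENNReal.ofReal c • μ.withDensity (ENNReal.ofReal ^ k) := by
  have hmeas : Measurable (ENNReal.ofReal ^ k) := ENNReal.measurable_ofReal.pow_const k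
  rw [← withDensity_smul _ hmeas]
  refine withDensity_congr_ae (hμ.mono fun x hx => ?_)
  simp [ENNReal.ofReal_mul hc, ENNReal.ofReal_pow hx]

lemma smul_withDensity_ofReal_pow_div {μ : Measure ℝ} (hμ : ∀ᵐ x ∂μ, 0 ≤ x) {c m : ℝ}
    (hc : 0 ≤ c) (hm : 0 < m) (k : ℕ) :
    ENNReal.ofReal (c * m) • μ.withDensity (fun x => ENNReal.ofReal (x ^ k / m))
      = ENNReal.ofReal c • μ.withDensity (ENNReal.ofReal ^ k) := by
  simp_rw [div_eq_inv_mul]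
  rw [withDensity_ofReal_mul_pow hμ (inv_nonneg.2 hm.le), smul_smul,
    ← ENNReal.ofReal_mul (by positivity), mul_inv_cancel_right₀ hm.ne']

end MeasureTheory

theorem stmt_0_general (P : ℕ → Measure ℝ) (Q : Measure ℝ) (b : ℕ → ℝ)
    (hPsupp : ∀ n, P n (Set.Icc (0:ℝ) 1)ᶜ = 0)
    (hQsupp : Q (Set.Icc (0:ℝ) 1)ᶜ = 0)
    (hb : ∀ n, b n ∈ Set.Ico (0:ℝ) 1)
    (hmean : ∀ n, 0 < ∫ y, y ∂P n)
    (hm : ∀ k, 0 < ∫ x, x ^ k ∂Q)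
    (hrec : ∀ n, 1 ≤ n → P n
      = (P (n-1)).withDensity (fun x => ENNReal.ofReal ((1 - b n) * x / ∫ y, y ∂P (n-1)))
        + ENNReal.ofReal (b n) • Q) :
    ∀ n, 1 ≤ n → P n
      = (P 0).withDensity
          (fun x => ENNReal.ofReal ((∏ l ∈ Finset.range n, ((1 - b (l+1)) / ∫ y, y ∂P l)) * x ^ n))
        + ∑ j ∈ Finset.Icc 1 n,
            ENNReal.ofReal ((∏ l ∈ Finset.Icc j (n-1), ((1 - b (l+1)) / ∫ y, y ∂P l))
                * b j * (∫ x, x ^ (n-j) ∂Q))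
              • Q.withDensity (fun x => ENNReal.ofReal (x ^ (n-j) / ∫ y, y ^ (n-j) ∂Q)) := by
  set a : ℕ → ℝ := fun l => (1 - b (l + 1)) / ∫ y, y ∂P l
  have ha : ∀ l, 0 ≤ a l := fun l => div_nonneg (sub_nonneg.2 (hb (l + 1)).2.le) (hmean l).le
  have hprod : ∀ s : Finset ℕ, 0 ≤ ∏ l ∈ s, a l := fun s => Finset.prod_nonneg fun l _ => ha l
  have nonneg : ∀ μ : Measure ℝ, μ (Icc 0 1)ᶜ = 0 → ∀ᵐ x ∂μ, 0 ≤ x :=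
    fun μ h => by filter_upwards [mem_ae_iff.2 h] with x hx using hx.1
  have hstep : ∀ n, P (n + 1) = ENNReal.ofReal (a n) • (P n).withDensity ENNReal.ofReal
      + ENNReal.ofReal (b (n + 1)) • Q := by
    intro n
    rw [hrec (n + 1) (Nat.le_add_left 1 n), Nat.add_sub_cancel,
      ← withDensity_smul _ ENNReal.measurable_ofReal]
    congr 2
    funext x
    rw [Pi.smul_apply, smul_eq_mul, ← ENNReal.ofReal_mul (ha n), mul_div_right_comm]
  intro n hn
  obtain ⟨n, rfl⟩ := Nat.exists_eq_add_of_le' hn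
  rw [eq_of_withDensity_recursion (a := fun l => ENNReal.ofReal (a l))
    (c := fun j => ENNReal.ofReal (b j)) ENNReal.measurable_ofReal hstep (n + 1),
    ← ENNReal.ofReal_prod_of_nonneg fun l _ => ha l,
    ← withDensity_ofReal_mul_pow (nonneg _ (hPsupp 0)) (hprod _), Nat.add_sub_cancel]
  congr 1
  refine Finset.sum_congr rfl fun j _ => ?_
  rw [smul_withDensity_ofReal_pow_div (nonneg _ hQsupp) (mul_nonneg (hprod _) (hb j).1) (hm _),
    ← ENNReal.ofReal_prod_of_nonneg fun l _ => ha l, ← ENNReal.ofReal_mul (hprod _),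
    Finset.Ico_add_one_right_eq_Icc]

theorem stmt_0 (P : ℕ → Measure ℝ) (Q : Measure ℝ) (b : ℕ → ℝ)
    (hP : ∀ n, IsProbabilityMeasure (P n))
    (hPsupp : ∀ n, P n (Set.Icc (0:ℝ) 1)ᶜ = 0)
    (hQ : IsProbabilityMeasure Q) (hQsupp : Q (Set.Icc (0:ℝ) 1)ᶜ = 0)
    (hb : ∀ n, b n ∈ Set.Ico (0:ℝ) 1)
    (hmean : ∀ n, 0 < ∫ y, y ∂P n)
    (hm : ∀ k, 0 < ∫ x, x ^ k ∂Q)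
    (hrec : ∀ n, 1 ≤ n → P n
      = (P (n-1)).withDensity (fun x => ENNReal.ofReal ((1 - b n) * x / ∫ y, y ∂P (n-1)))
        + ENNReal.ofReal (b n) • Q) :
    ∀ n, 1 ≤ n → P n
      = (P 0).withDensity
          (fun x => ENNReal.ofReal ((∏ l ∈ Finset.range n, ((1 - b (l+1)) / ∫ y, y ∂P l)) * x ^ n))
        + ∑ j ∈ Finset.Icc 1 n,
            ENNReal.ofReal ((∏ l ∈ Finset.Icc j (n-1), ((1 - b (l+1)) / ∫ y, y ∂P l))
                * b j * (∫ x, x ^ (n-j) ∂Q))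
              • Q.withDensity (fun x => ENNReal.ofReal (x ^ (n-j) / ∫ y, y ^ (n-j) ∂Q)) :=
  stmt_0_general P Q b hPsupp hQsupp hb hmean hm hrec
end

section
/- Let $u_1, u_2$ be Borel probability measures on $[0,1]$ with common essential supremum $h > 0$, such that $u_1(A) \le u_2(A)$ for every Borel $A \subseteq [0,h)$. Suppose for some $\epsilon > 0$ and $a \in (0,h)$ we have $u_1([0,a]) + \epsilon \le u_2([0,a])$. Then $\int y\, u_1(dy) \ge c(a,\epsilon) \int y\, u_2(dy)$ where $c(a,\epsilon) = \frac{1}{1 - \epsilon(h-a)} > 1$. -/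
/-!
With `G(t) = u([t, ∞))`, the layer-cake formula gives `∫ y du = ∫₀¹ G(t) dt`. Comparing
`u₁` and `u₂` on `[0, t)` shows `G₂ ≤ G₁` everywhere (above `h` because `u₂` has no mass there),
and `G₁ - G₂ ≥ ε` on `(a, h]`, since there `[0, t)` contains `[0, a]`. Hence
`∫ y du₁ - ∫ y du₂ ≥ ε (h - a) =: δ`, and since `∫ y du₁ ≤ 1` this gives
`(1 - δ) ∫ y du₁ ≥ ∫ y du₁ - δ ≥ ∫ y du₂`.
-/

open MeasureTheory Set

namespace MeasureTheory

variable {μ ν : Measure ℝ}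

lemma measure_Iio_eq_zero_of_compl_Icc {a b : ℝ} (hμ : μ (Icc a b)ᶜ = 0) : μ (Iio a) = 0 := by
  refine measure_mono_null (fun y hy => ?_) hμ
  exact fun hy' => (mem_Iio.mp hy).not_ge hy'.1

lemma measure_Ioi_eq_zero_of_compl_Icc {a b : ℝ} (hμ : μ (Icc a b)ᶜ = 0) : μ (Ioi b) = 0 := by
  refine measure_mono_null (fun y hy => ?_) hμ
  exact fun hy' => (mem_Ioi.mp hy).not_ge hy'.2

lemma measureReal_Icc_eq_measureReal_Iic {a : ℝ} (hμ : μ (Iio a) = 0) (b : ℝ) :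
    μ.real (Icc a b) = μ.real (Iic b) := by
  simp only [measureReal_def]
  rw [← Ici_inter_Iic, inter_comm, measure_inter_conull (by rwa [compl_Ici])]

lemma measureReal_Ico_eq_measureReal_Iio {a : ℝ} (hμ : μ (Iio a) = 0) (b : ℝ) :
    μ.real (Ico a b) = μ.real (Iio b) := by
  simp only [measureReal_def]
  rw [← Ici_inter_Iio, inter_comm, measure_inter_conull (by rwa [compl_Ici])]

lemma setOf_pos_measure_Icc_subset_Iic (b : ℝ) : {x | 0 < μ (Icc x b)} ⊆ Iic b := by
  intro x hx
  rw [mem_Iic]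
  by_contra! hbx
  simp [Icc_eq_empty_of_lt hbx] at hx

lemma sSup_setOf_pos_measure_Icc_le {b : ℝ} (hb : 0 ≤ b) : sSup {x | 0 < μ (Icc x b)} ≤ b :=
  Real.sSup_le (fun _ hx => setOf_pos_measure_Icc_subset_Iic b hx) hb

lemma measure_Ici_eq_zero_of_sSup_lt {b t : ℝ} (hb : μ (Ioi b) = 0)
    (ht : sSup {x | 0 < μ (Icc x b)} < t) : μ (Ici t) = 0 := by
  have hIcc : μ (Icc t b) = 0 := by
    by_contra hne
    have hbdd : BddAbove {x | 0 < μ (Icc x b)} := ⟨b, setOf_pos_measure_Icc_subset_Iic b⟩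
    exact (le_csSup hbdd (pos_iff_ne_zero.mpr hne)).not_gt ht
  refine measure_mono_null (fun y hy => ?_) (measure_union_null hIcc hb)
  exact (le_or_gt y b).imp (fun hyb => ⟨hy, hyb⟩) id

section Support

variable {M : ℝ} (hμ : μ (Icc 0 M)ᶜ = 0)
include hμ

lemma integrable_id_of_compl_Icc [IsFiniteMeasure μ] : Integrable (fun y => y) μ :=
  .of_bound measurable_id.aestronglyMeasurable M <| (ae_iff.mpr hμ).mono fun y hy => by
    rw [Real.norm_eq_abs, abs_le]
    exact ⟨by linarith [hy.1, hy.2], hy.2⟩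

lemma integral_id_mem_Icc_of_compl_Icc [IsProbabilityMeasure μ] : ∫ y, y ∂μ ∈ Icc 0 M := by
  have hae : ∀ᵐ y ∂μ, y ∈ Icc 0 M := ae_iff.mpr hμ
  refine ⟨integral_nonneg_of_ae (hae.mono fun y hy => hy.1), ?_⟩
  simpa using integral_mono_ae (integrable_id_of_compl_Icc hμ) (integrable_const M)
    (hae.mono fun y hy => hy.2)

lemma integral_id_eq_setIntegral_measureReal_Ici [IsFiniteMeasure μ] :
    ∫ y, y ∂μ = ∫ t in Ioc 0 M, μ.real (Ici t) := by
  have hae : ∀ᵐ y ∂μ, y ∈ Icc 0 M := ae_iff.mpr hμ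
  exact (integrable_id_of_compl_Icc hμ).integral_eq_integral_Ioc_meas_le
    (hae.mono fun _ hy => hy.1) (hae.mono fun _ hy => hy.2)

end Support

lemma integrableOn_measureReal_Ici [IsFiniteMeasure μ] (b c : ℝ) :
    IntegrableOn (fun t => μ.real (Ici t)) (Ioc b c) := by
  have hanti : Antitone fun t => μ.real (Ici t) := fun _ _ hst =>
    measureReal_mono (Ici_subset_Ici.mpr hst)
  exact ((hanti.antitoneOn _).integrableOn_isCompact isCompact_Icc).mono_set Ioc_subset_Icc_self

lemma mul_sub_le_integral_id_sub [IsFiniteMeasure μ] [IsFiniteMeasure ν] {M : ℝ}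
    (hμ : μ (Icc 0 M)ᶜ = 0) (hν : ν (Icc 0 M)ᶜ = 0) {a h ε : ℝ} (ha : 0 ≤ a) (hah : a ≤ h)
    (hh : h ≤ M) (hle : ∀ t, ν.real (Ici t) ≤ μ.real (Ici t))
    (hgap : ∀ t ∈ Ioc a h, ε ≤ μ.real (Ici t) - ν.real (Ici t)) :
    ε * (h - a) ≤ ∫ y, y ∂μ - ∫ y, y ∂ν := by
  have hint := (integrableOn_measureReal_Ici (μ := μ) 0 M).sub
    (integrableOn_measureReal_Ici (μ := ν) 0 M)
  rw [integral_id_eq_setIntegral_measureReal_Ici hμ, integral_id_eq_setIntegral_measureReal_Ici hν,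
    ← integral_sub (integrableOn_measureReal_Ici 0 M) (integrableOn_measureReal_Ici 0 M)]
  calc ε * (h - a) = ε * volume.real (Ioc a h) := by rw [Real.volume_real_Ioc_of_le hah]
    _ ≤ ∫ t in Ioc a h, (μ.real (Ici t) - ν.real (Ici t)) :=
      setIntegral_ge_of_const_le_real measurableSet_Ioc measure_Ioc_lt_top.ne hgap
        (hint.mono_set (Ioc_subset_Ioc ha hh))
    _ ≤ ∫ t in Ioc 0 M, (μ.real (Ici t) - ν.real (Ici t)) :=
      setIntegral_mono_set hint (ae_of_all _ fun t => sub_nonneg.mpr (hle t))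
        (Ioc_subset_Ioc ha hh).eventuallyLE

lemma measureReal_Ici_eq_one_sub (ρ : Measure ℝ) [IsProbabilityMeasure ρ] (t : ℝ) :
    ρ.real (Ici t) = 1 - ρ.real (Iio t) := by
  rw [← compl_Iio, probReal_compl_eq_one_sub measurableSet_Iio]

section Dominated

variable [IsProbabilityMeasure μ] [IsProbabilityMeasure ν] {h : ℝ}
  (hle : ∀ A : Set ℝ, MeasurableSet A → A ⊆ Ico 0 h → μ A ≤ ν A)
include hle

lemma measureReal_Ici_le_measureReal_Ici (hμ : μ (Iio 0) = 0)
    (hν : ∀ t, h < t → ν (Ici t) = 0) (t : ℝ) : ν.real (Ici t) ≤ μ.real (Ici t) := by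
  rcases le_or_gt t h with hth | hht
  · have hIio : μ.real (Iio t) ≤ ν.real (Iio t) := calc
      μ.real (Iio t) = μ.real (Ico 0 t) := by
        rw [measureReal_Ico_eq_measureReal_Iio hμ]
      _ ≤ ν.real (Ico 0 t) := ENNReal.toReal_mono (measure_ne_top _ _)
        (hle _ measurableSet_Ico (Ico_subset_Ico_right hth))
      _ ≤ ν.real (Iio t) := measureReal_mono Ico_subset_Iio_self
    rw [measureReal_Ici_eq_one_sub μ, measureReal_Ici_eq_one_sub ν]
    linarith
  · rw [measureReal_def ν, hν t hht, ENNReal.toReal_zero]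
    exact measureReal_nonneg

lemma measureReal_Iic_sub_le_measureReal_Ici_sub {a t : ℝ} (ha : 0 ≤ a) (hat : a < t)
    (hth : t ≤ h) : ν.real (Iic a) - μ.real (Iic a) ≤ μ.real (Ici t) - ν.real (Ici t) := by
  have hsplit (ρ : Measure ℝ) [IsFiniteMeasure ρ] :
      ρ.real (Iio t) = ρ.real (Iic a) + ρ.real (Ioo a t) := by
    rw [← Iic_union_Ioo_eq_Iio hat,
      measureReal_union ((Iic_disjoint_Ioi le_rfl).mono_right Ioo_subset_Ioi_self) measurableSet_Ioo]
  have hIoo : μ.real (Ioo a t) ≤ ν.real (Ioo a t) := ENNReal.toReal_mono (measure_ne_top _ _)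
    (hle _ measurableSet_Ioo fun _ hy => ⟨ha.trans hy.1.le, hy.2.trans_le hth⟩)
  rw [measureReal_Ici_eq_one_sub μ, measureReal_Ici_eq_one_sub ν, hsplit μ, hsplit ν]
  linarith

end Dominated

end MeasureTheory

theorem stmt_4_general (u₁ u₂ : Measure ℝ) (h a ε : ℝ)
    (hu₁ : IsProbabilityMeasure u₁) (hu₂ : IsProbabilityMeasure u₂)
    (hsupp₁ : u₁ (Set.Icc (0:ℝ) 1)ᶜ = 0) (hsupp₂ : u₂ (Set.Icc (0:ℝ) 1)ᶜ = 0)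
    (hS₂ : sSup {x : ℝ | 0 < u₂ (Set.Icc x 1)} = h)
    (hle : ∀ A : Set ℝ, MeasurableSet A → A ⊆ Set.Ico 0 h → u₁ A ≤ u₂ A)
    (hε : 0 < ε) (ha : a ∈ Set.Ioo 0 h)
    (hgap : (u₁ (Set.Icc 0 a)).toReal + ε ≤ (u₂ (Set.Icc 0 a)).toReal) :
    (1 : ℝ) < 1 / (1 - ε * (h - a))
      ∧ (1 / (1 - ε * (h - a))) * ∫ y, y ∂u₂ ≤ ∫ y, y ∂u₁ := by
  obtain ⟨ha0, hah⟩ := ha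
  rw [← measureReal_def, ← measureReal_def] at hgap
  have hh1 : h ≤ 1 := hS₂ ▸ sSup_setOf_pos_measure_Icc_le zero_le_one
  have htail (t : ℝ) (ht : h < t) : u₂ (Ici t) = 0 :=
    measure_Ici_eq_zero_of_sSup_lt (measure_Ioi_eq_zero_of_compl_Icc hsupp₂) (hS₂ ▸ ht)
  have hgap_tail (t : ℝ) (ht : t ∈ Ioc a h) : ε ≤ u₁.real (Ici t) - u₂.real (Ici t) := by
    have := measureReal_Iic_sub_le_measureReal_Ici_sub hle ha0.le ht.1 ht.2
    rw [← measureReal_Icc_eq_measureReal_Iic (measure_Iio_eq_zero_of_compl_Icc hsupp₁),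
      ← measureReal_Icc_eq_measureReal_Iic (measure_Iio_eq_zero_of_compl_Icc hsupp₂)] at this
    linarith
  have hδ := mul_sub_le_integral_id_sub hsupp₁ hsupp₂ ha0.le hah.le hh1
    (measureReal_Ici_le_measureReal_Ici hle (measure_Iio_eq_zero_of_compl_Icc hsupp₁) htail)
    hgap_tail
  obtain ⟨-, hE₁⟩ := integral_id_mem_Icc_of_compl_Icc hsupp₁
  obtain ⟨hE₂, -⟩ := integral_id_mem_Icc_of_compl_Icc hsupp₂
  have hε1 : ε ≤ 1 := by
    linarith [measureReal_le_one (μ := u₂) (s := Icc 0 a), measureReal_nonneg (μ := u₁) (s := Icc 0 a)]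
  have hδ0 : 0 < ε * (h - a) := mul_pos hε (by linarith)
  have hδ1 : ε * (h - a) < 1 := by nlinarith
  constructor
  · rw [lt_div_iff₀ (by linarith)]; linarith
  · rw [div_mul_eq_mul_div, one_mul, div_le_iff₀ (by linarith)]
    nlinarith

theorem stmt_4 (u₁ u₂ : Measure ℝ) (h a ε : ℝ)
    (hu₁ : IsProbabilityMeasure u₁) (hu₂ : IsProbabilityMeasure u₂)
    (hsupp₁ : u₁ (Set.Icc (0:ℝ) 1)ᶜ = 0) (hsupp₂ : u₂ (Set.Icc (0:ℝ) 1)ᶜ = 0)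
    (hS₁ : sSup {x : ℝ | 0 < u₁ (Set.Icc x 1)} = h)
    (hS₂ : sSup {x : ℝ | 0 < u₂ (Set.Icc x 1)} = h)
    (hpos : 0 < h)
    (hle : ∀ A : Set ℝ, MeasurableSet A → A ⊆ Set.Ico 0 h → u₁ A ≤ u₂ A)
    (hε : 0 < ε) (ha : a ∈ Set.Ioo 0 h)
    (hgap : (u₁ (Set.Icc 0 a)).toReal + ε ≤ (u₂ (Set.Icc 0 a)).toReal) :
    (1 : ℝ) < 1 / (1 - ε * (h - a))
      ∧ (1 / (1 - ε * (h - a))) * ∫ y, y ∂u₂ ≤ ∫ y, y ∂u₁ :=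
  stmt_4_general u₁ u₂ h a ε hu₁ hu₂ hsupp₁ hsupp₂ hS₂ hle hε ha hgap
end

section
/- Fix $b \in (0,1)$, a probability measure $Q$ on $[0,1]$ with $\int y\,Q(dy) > 0$, and $h \in (0,1]$. Define the map $T$ on probability measures $u$ on $[0,1]$ with positive mean by $T(u)(dx) = (1-b)\frac{x\,u(dx)}{\int y\,u(dy)} + b\,Q(dx)$. If $u, v$ are probability measures with positive mean, common essential supremum $h$, and $u(A) \le v(A)$ for every Borel $A \subseteq [0,h)$, then $T(u)(A) \le T(v)(A)$ for every Borel $A \subseteq [0,h)$, and $T(u)(\{h\}) \ge T(v)(\{h\})$. -/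
open MeasureTheory Set

/-! Both measures live on `[0, h]`, so the mean of each is `m_w = ∫_{[0,h)} y dw + h w{h}`, and
`h - m_w = ∫_{[0,h)} (h - y) dw`. As `u ≤ v` on `[0, h)`, this gives `m_v ≤ m_u`, so on `[0, h)`
the size-biased part `x u(dx) / m_u` is dominated by `x v(dx) / m_v`. At the atom, `v{h} ≤ u{h}`
(the masses of `[0, h)` being ordered the other way) together with
`∫_{[0,h)} y du ≤ ∫_{[0,h)} y dv` gives `v{h} m_u ≤ u{h} m_v`, which is `T(v){h} ≤ T(u){h}`. -/

/-- The one-step mutation-selection (Kingman) map: size-biasing with probability `1-b`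
plus mutation to `Q` with probability `b`. -/
noncomputable def kingmanMap (b : ℝ) (Q u : Measure ℝ) : Measure ℝ :=
  u.withDensity (fun x => ENNReal.ofReal ((1 - b) * x / ∫ y, y ∂u))
    + ENNReal.ofReal b • Q

lemma MeasureTheory.Measure.restrict_le_restrict_of_forall_subset {α : Type*}
    [MeasurableSpace α] {μ ν : Measure α} {s : Set α} (hs : MeasurableSet s)
    (h : ∀ t ⊆ s, MeasurableSet t → μ t ≤ ν t) : μ.restrict s ≤ ν.restrict s := by
  refine Measure.le_iff.2 fun t ht => ?_
  rw [Measure.restrict_apply ht, Measure.restrict_apply ht]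
  exact h _ inter_subset_right (ht.inter hs)

section EssSup

variable {w : Measure ℝ}

lemma ae_le_sSup_pos_measure_Icc (hw : w (Icc 0 1)ᶜ = 0) :
    ∀ᵐ y ∂w, y ≤ sSup {x : ℝ | 0 < w (Icc x 1)} := by
  set h := sSup {x : ℝ | 0 < w (Icc x 1)}
  have hbdd : BddAbove {x : ℝ | 0 < w (Icc x 1)} :=
    ⟨1, fun x hx => by by_contra! h1; simp [Icc_eq_empty_of_lt h1] at hx⟩
  have hnull : ∀ x, h < x → ∀ᵐ y ∂w, y ≤ x := by
    intro x hx
    have hIcc : w (Icc x 1) = 0 := by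
      by_contra hne
      exact (le_csSup hbdd (pos_iff_ne_zero.2 hne)).not_gt hx
    rw [ae_iff]
    refine measure_mono_null (fun y hy => ?_) (measure_union_null hIcc hw)
    by_cases hy1 : y ≤ 1
    · exact .inl ⟨(not_le.1 hy).le, hy1⟩
    · exact .inr fun hy' => hy1 hy'.2
  have hrat : ∀ᵐ y ∂w, ∀ q : ℚ, h < q → y ≤ (q : ℝ) :=
    ae_all_iff.2 fun q => Filter.eventually_imp_distrib_left.2 (hnull q)
  filter_upwards [hrat] with y hy using le_of_forall_lt_rat_imp_le hy

lemma ae_mem_Icc_sSup_pos_measure_Icc (hw : w (Icc 0 1)ᶜ = 0) :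
    ∀ᵐ y ∂w, y ∈ Icc 0 (sSup {x : ℝ | 0 < w (Icc x 1)}) := by
  filter_upwards [ae_le_sSup_pos_measure_Icc hw, mem_ae_iff.2 hw] with y hy hy01
    using ⟨hy01.1, hy⟩

end EssSup

section SupportedOnIcc

variable {h : ℝ}

lemma measureReal_Ico_add_measureReal_singleton {w : Measure ℝ} [IsProbabilityMeasure w]
    (hh : 0 ≤ h) (hw : ∀ᵐ y ∂w, y ∈ Icc 0 h) : w.real (Ico 0 h) + w.real {h} = 1 := by
  have hIcc : w (Icc 0 h) = 1 := by
    rwa [ae_mem_iff_measure_eq measurableSet_Icc.nullMeasurableSet, measure_univ] at hw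
  rw [← measureReal_union (by simp) (measurableSet_singleton h), Ico_union_right hh,
    measureReal_def, hIcc, ENNReal.toReal_one]

lemma integral_id_eq_setIntegral_Ico_add {w : Measure ℝ} [IsFiniteMeasure w] (hh : 0 ≤ h)
    (hw : ∀ᵐ y ∂w, y ∈ Icc 0 h) :
    ∫ y, y ∂w = ∫ y in Ico 0 h, y ∂w + w.real {h} * h := by
  have hint : Integrable (fun y : ℝ => y) w := .of_mem_Icc 0 h aemeasurable_id hw
  conv_lhs => rw [← Measure.restrict_eq_self_of_ae_mem hw, ← Ico_union_right hh]
  rw [setIntegral_union (by simp) (measurableSet_singleton h) hint.integrableOn hint.integrableOn,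
    integral_singleton, smul_eq_mul]

lemma sub_integral_id_eq_setIntegral_Ico {w : Measure ℝ} [IsProbabilityMeasure w] (hh : 0 ≤ h)
    (hw : ∀ᵐ y ∂w, y ∈ Icc 0 h) : h - ∫ y, y ∂w = ∫ y in Ico 0 h, (h - y) ∂w := by
  have hint : Integrable (fun y : ℝ => y) w := .of_mem_Icc 0 h aemeasurable_id hw
  rw [integral_sub (integrable_const h) hint.integrableOn, setIntegral_const, smul_eq_mul,
    integral_id_eq_setIntegral_Ico_add hh hw]
  linear_combination (-h) * measureReal_Ico_add_measureReal_singleton hh hw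

variable {u v : Measure ℝ} [IsProbabilityMeasure u] [IsProbabilityMeasure v]

lemma integral_id_le_of_restrict_Ico_le (hh : 0 ≤ h) (hu : ∀ᵐ y ∂u, y ∈ Icc 0 h)
    (hv : ∀ᵐ y ∂v, y ∈ Icc 0 h) (hle : u.restrict (Ico 0 h) ≤ v.restrict (Ico 0 h)) :
    ∫ y, y ∂v ≤ ∫ y, y ∂u := by
  have hint : Integrable (fun y : ℝ => y) v := .of_mem_Icc 0 h aemeasurable_id hv
  have hgap : ∫ y in Ico 0 h, (h - y) ∂u ≤ ∫ y in Ico 0 h, (h - y) ∂v :=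
    integral_mono_measure hle (ae_restrict_of_forall_mem measurableSet_Ico
      fun y hy => sub_nonneg.2 hy.2.le) ((integrable_const h).sub hint).integrableOn
  linarith [sub_integral_id_eq_setIntegral_Ico hh hu, sub_integral_id_eq_setIntegral_Ico hh hv]

lemma measureReal_singleton_mul_integral_id_le (hh : 0 ≤ h) (hu : ∀ᵐ y ∂u, y ∈ Icc 0 h)
    (hv : ∀ᵐ y ∂v, y ∈ Icc 0 h) (hle : u.restrict (Ico 0 h) ≤ v.restrict (Ico 0 h)) :
    v.real {h} * ∫ y, y ∂u ≤ u.real {h} * ∫ y, y ∂v := by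
  have hint : Integrable (fun y : ℝ => y) v := .of_mem_Icc 0 h aemeasurable_id hv
  have hmass : u.real (Ico 0 h) ≤ v.real (Ico 0 h) := by
    simpa only [measureReal_def, Measure.restrict_apply_univ] using
      ENNReal.toReal_mono (measure_ne_top _ _) (hle univ)
  have hatom : v.real {h} ≤ u.real {h} := by
    linarith [measureReal_Ico_add_measureReal_singleton hh hu,
      measureReal_Ico_add_measureReal_singleton hh hv]
  have hmean : ∫ y in Ico 0 h, y ∂u ≤ ∫ y in Ico 0 h, y ∂v :=
    integral_mono_measure hle (ae_restrict_of_forall_mem measurableSet_Ico fun y hy => hy.1)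
      hint.integrableOn
  have hmean_nonneg : 0 ≤ ∫ y in Ico 0 h, y ∂u :=
    setIntegral_nonneg measurableSet_Ico fun y hy => hy.1
  rw [integral_id_eq_setIntegral_Ico_add hh hu, integral_id_eq_setIntegral_Ico_add hh hv]
  nlinarith [mul_le_mul hatom hmean hmean_nonneg measureReal_nonneg]

end SupportedOnIcc

section KingmanMap

variable {b : ℝ} {Q u v : Measure ℝ}

lemma kingmanMap_apply_le_of_restrict_le (hb : b ≤ 1) {A : Set ℝ} (hA : MeasurableSet A)
    (hA0 : A ⊆ Ici 0) (hv : 0 < ∫ y, y ∂v) (hvu : ∫ y, y ∂v ≤ ∫ y, y ∂u)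
    (hle : u.restrict A ≤ v.restrict A) : kingmanMap b Q u A ≤ kingmanMap b Q v A := by
  simp only [kingmanMap, Measure.add_apply, Measure.smul_apply, smul_eq_mul,
    withDensity_apply _ hA]
  gcongr ?_ + _
  calc ∫⁻ x in A, ENNReal.ofReal ((1 - b) * x / ∫ y, y ∂u) ∂u
      ≤ ∫⁻ x in A, ENNReal.ofReal ((1 - b) * x / ∫ y, y ∂v) ∂u :=
        setLIntegral_mono' hA fun x hx => ENNReal.ofReal_le_ofReal <|
          div_le_div_of_nonneg_left (mul_nonneg (sub_nonneg.2 hb) (hA0 hx)) hv hvu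
    _ ≤ ∫⁻ x in A, ENNReal.ofReal ((1 - b) * x / ∫ y, y ∂v) ∂v := lintegral_mono' hle le_rfl

lemma kingmanMap_singleton (b : ℝ) (Q w : Measure ℝ) [IsFiniteMeasure w] (a : ℝ) :
    kingmanMap b Q w {a} =
      ENNReal.ofReal (w.real {a} * ((1 - b) * a / ∫ y, y ∂w)) + ENNReal.ofReal b * Q {a} := by
  rw [kingmanMap, Measure.add_apply, Measure.smul_apply, smul_eq_mul,
    withDensity_apply _ (measurableSet_singleton a), lintegral_singleton,
    ENNReal.ofReal_mul measureReal_nonneg, ofReal_measureReal, mul_comm]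

lemma kingmanMap_singleton_le [IsFiniteMeasure u] [IsFiniteMeasure v] (hb : b ≤ 1) {a : ℝ}
    (ha : 0 ≤ a) (hu : 0 < ∫ y, y ∂u) (hv : 0 < ∫ y, y ∂v)
    (hatom : v.real {a} * ∫ y, y ∂u ≤ u.real {a} * ∫ y, y ∂v) :
    kingmanMap b Q v {a} ≤ kingmanMap b Q u {a} := by
  rw [kingmanMap_singleton, kingmanMap_singleton]
  gcongr ?_ + _
  refine ENNReal.ofReal_le_ofReal ?_
  rw [mul_div_assoc', mul_div_assoc', div_le_div_iff₀ hv hu]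
  nlinarith [mul_le_mul_of_nonneg_left hatom (mul_nonneg (sub_nonneg.2 hb) ha)]

end KingmanMap

theorem stmt_5_general (b : ℝ) (hb : b ∈ Set.Ioo (0:ℝ) 1) (Q : Measure ℝ)
    (h : ℝ) (hh : h ∈ Set.Ioc (0:ℝ) 1)
    (u v : Measure ℝ)
    (hu : IsProbabilityMeasure u) (hv : IsProbabilityMeasure v)
    (husupp : u (Set.Icc (0:ℝ) 1)ᶜ = 0) (hvsupp : v (Set.Icc (0:ℝ) 1)ᶜ = 0)
    (humean : 0 < ∫ y, y ∂u) (hvmean : 0 < ∫ y, y ∂v)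
    (hSu : sSup {x : ℝ | 0 < u (Set.Icc x 1)} = h)
    (hSv : sSup {x : ℝ | 0 < v (Set.Icc x 1)} = h)
    (hle : ∀ A : Set ℝ, MeasurableSet A → A ⊆ Set.Ico 0 h → u A ≤ v A) :
    (∀ A : Set ℝ, MeasurableSet A → A ⊆ Set.Ico 0 h →
        kingmanMap b Q u A ≤ kingmanMap b Q v A)
      ∧ kingmanMap b Q v {h} ≤ kingmanMap b Q u {h} := by
  have hu_Icc : ∀ᵐ y ∂u, y ∈ Icc 0 h := hSu ▸ ae_mem_Icc_sSup_pos_measure_Icc husupp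
  have hv_Icc : ∀ᵐ y ∂v, y ∈ Icc 0 h := hSv ▸ ae_mem_Icc_sSup_pos_measure_Icc hvsupp
  have hrestrict : ∀ A, MeasurableSet A → A ⊆ Ico 0 h → u.restrict A ≤ v.restrict A :=
    fun A hA hAh => Measure.restrict_le_restrict_of_forall_subset hA
      fun t htA ht => hle t ht (htA.trans hAh)
  have hIco := hrestrict _ measurableSet_Ico subset_rfl
  refine ⟨fun A hA hAh => kingmanMap_apply_le_of_restrict_le hb.2.le hA
      (hAh.trans Ico_subset_Ici_self) hvmean
      (integral_id_le_of_restrict_Ico_le hh.1.le hu_Icc hv_Icc hIco) (hrestrict A hA hAh), ?_⟩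
  exact kingmanMap_singleton_le hb.2.le hh.1.le humean hvmean
    (measureReal_singleton_mul_integral_id_le hh.1.le hu_Icc hv_Icc hIco)

theorem stmt_5 (b : ℝ) (hb : b ∈ Set.Ioo (0:ℝ) 1) (Q : Measure ℝ)
    (hQ : IsProbabilityMeasure Q) (hQsupp : Q (Set.Icc (0:ℝ) 1)ᶜ = 0)
    (hQmean : 0 < ∫ y, y ∂Q) (h : ℝ) (hh : h ∈ Set.Ioc (0:ℝ) 1)
    (u v : Measure ℝ)
    (hu : IsProbabilityMeasure u) (hv : IsProbabilityMeasure v)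
    (husupp : u (Set.Icc (0:ℝ) 1)ᶜ = 0) (hvsupp : v (Set.Icc (0:ℝ) 1)ᶜ = 0)
    (humean : 0 < ∫ y, y ∂u) (hvmean : 0 < ∫ y, y ∂v)
    (hSu : sSup {x : ℝ | 0 < u (Set.Icc x 1)} = h)
    (hSv : sSup {x : ℝ | 0 < v (Set.Icc x 1)} = h)
    (hle : ∀ A : Set ℝ, MeasurableSet A → A ⊆ Set.Ico 0 h → u A ≤ v A) :
    (∀ A : Set ℝ, MeasurableSet A → A ⊆ Set.Ico 0 h →
        kingmanMap b Q u A ≤ kingmanMap b Q v A)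
      ∧ kingmanMap b Q v {h} ≤ kingmanMap b Q u {h} :=
  stmt_5_general b hb Q h hh u v hu hv husupp hvsupp humean hvmean hSu hSv hle
end

section
/- Let $b \in (0,1)$, $h \in (0,1]$, and $Q$ a probability measure on $[0,1]$ supported in $[0,h]$ with $\int \frac{Q(dx)}{1-x/h} < b^{-1}$ (in particular the integral is finite, which forces $Q(\{h\}) = 0$). Define $\mathcal{K}(dx) = \frac{b\,Q(dx)}{1 - x/h} + \Big(1 - \int \frac{b\,Q(dy)}{1-y/h}\Big)\delta_h(dx)$. Then $\mathcal{K}$ is a probability measure with $\mathcal{K}(\{h\}) > 0$, its mean is $\int x\,\mathcal{K}(dx) = (1-b)h$, and $\mathcal{K}$ is a fixed point of the Kingman map: $\mathcal{K}(dx) = (1-b)\frac{x\,\mathcal{K}(dx)}{\int y\,\mathcal{K}(dy)} + b\,Q(dx)$. -/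
open MeasureTheory Set

open scoped ENNReal

/-!
Write `𝒦 = kingmanFixedPoint b h Q`. Its density `w x = 1 / (1 - x / h)` with respect to `b • Q`
satisfies `(x / h) w x + 1 = w x`. Integrated against `b • Q`, and with `x / h = 1` on the atom at `h`,
this says exactly `𝒦 = 𝒦.withDensity (x / h) + b • Q`, with no knowledge of the mean of `𝒦`.
Evaluating on the whole line gives `∫ x / h ∂𝒦 = 1 - b`, so the mean is `(1 - b) h`, and the Kingman
map with that mean has density `x / h`, which turns the identity into the fixed-point equation.
-/

noncomputable def kingmanFixedPoint (b h : ℝ) (Q : Measure ℝ) : Measure ℝ :=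
  Q.withDensity (fun x => ENNReal.ofReal b * (ENNReal.ofReal (1 - x / h))⁻¹)
    + (1 - ENNReal.ofReal b * ∫⁻ y, (ENNReal.ofReal (1 - y / h))⁻¹ ∂Q) • Measure.dirac h

lemma ENNReal.inv_ofReal_one_sub_mul_add_one {t : ℝ} (ht₀ : 0 ≤ t) (ht₁ : t < 1) :
    (ENNReal.ofReal (1 - t))⁻¹ * ENNReal.ofReal t + 1 = (ENNReal.ofReal (1 - t))⁻¹ := by
  have hpos : 0 < 1 - t := sub_pos.2 ht₁
  rw [← ENNReal.ofReal_inv_of_pos hpos, ← ENNReal.ofReal_mul (by positivity), ← ENNReal.ofReal_one,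
    ← ENNReal.ofReal_add (by positivity) zero_le_one]
  congr 1
  field_simp
  ring

lemma measurable_inv_ofReal_one_sub_div (h : ℝ) :
    Measurable fun x : ℝ => (ENNReal.ofReal (1 - x / h))⁻¹ := by
  fun_prop

lemma ae_lt_of_lintegral_inv_ofReal_one_sub_div_ne_top {Q : Measure ℝ} {h : ℝ} (hh : 0 < h)
    (hI : ∫⁻ x, (ENNReal.ofReal (1 - x / h))⁻¹ ∂Q ≠ ∞) : ∀ᵐ x ∂Q, x < h := by
  filter_upwards [ae_lt_top (measurable_inv_ofReal_one_sub_div h) hI] with x hx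
  rwa [ENNReal.inv_lt_top, ENNReal.ofReal_pos, sub_pos, div_lt_one hh] at hx

section kingmanFixedPoint

variable {b h : ℝ} {Q : Measure ℝ}

lemma kingmanFixedPoint_univ (hbI : ENNReal.ofReal b * ∫⁻ y, (ENNReal.ofReal (1 - y / h))⁻¹ ∂Q ≤ 1) :
    kingmanFixedPoint b h Q univ = 1 := by
  rw [kingmanFixedPoint, Measure.add_apply, withDensity_apply _ MeasurableSet.univ,
    Measure.restrict_univ, lintegral_const_mul _ (measurable_inv_ofReal_one_sub_div h),
    Measure.smul_apply, measure_univ, smul_eq_mul, mul_one, add_tsub_cancel_of_le hbI]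

lemma kingmanFixedPoint_singleton_pos
    (hbI : ENNReal.ofReal b * ∫⁻ y, (ENNReal.ofReal (1 - y / h))⁻¹ ∂Q < 1) :
    0 < kingmanFixedPoint b h Q {h} := by
  rw [kingmanFixedPoint, Measure.add_apply, Measure.smul_apply, Measure.dirac_apply_of_mem (mem_singleton h),
    smul_eq_mul, mul_one]
  exact (tsub_pos_of_lt hbI).trans_le le_add_self

lemma ae_nonneg_kingmanFixedPoint (hh : 0 ≤ h) (hQ : ∀ᵐ x ∂Q, 0 ≤ x) :
    ∀ᵐ x ∂kingmanFixedPoint b h Q, 0 ≤ x := by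
  rw [kingmanFixedPoint, ae_add_measure_iff]
  exact ⟨(withDensity_absolutelyContinuous Q _).ae_le hQ,
    Measure.ae_smul_measure ((ae_dirac_iff measurableSet_Ici).2 hh) _⟩

lemma kingmanFixedPoint_eq_withDensity_add (hh : 0 < h) (hQ : ∀ᵐ x ∂Q, x ∈ Ico 0 h) :
    kingmanFixedPoint b h Q =
      (kingmanFixedPoint b h Q).withDensity (fun x => ENNReal.ofReal (x / h))
        + ENNReal.ofReal b • Q := by
  set g : ℝ → ℝ≥0∞ := fun x => ENNReal.ofReal b * (ENNReal.ofReal (1 - x / h))⁻¹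
  have hg : Measurable g := measurable_const.mul (measurable_inv_ofReal_one_sub_div h)
  have hf : Measurable fun x : ℝ => ENNReal.ofReal (x / h) := by fun_prop
  have hdens : (g * fun x => ENNReal.ofReal (x / h)) + (fun _ => ENNReal.ofReal b) =ᵐ[Q] g := by
    filter_upwards [hQ] with x ⟨hx₀, hxh⟩
    simp only [Pi.add_apply, Pi.mul_apply, g, mul_assoc, ← mul_add_one,
      ENNReal.inv_ofReal_one_sub_mul_add_one (div_nonneg hx₀ hh.le) ((div_lt_one hh).2 hxh)]
  rw [kingmanFixedPoint, withDensity_add_measure, withDensity_smul_measure, dirac_withDensity,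
    div_self hh.ne', ENNReal.ofReal_one, one_smul, ← withDensity_mul Q hg hf,
    ← withDensity_const (μ := Q), add_right_comm, ← withDensity_add_left (hg.mul hf),
    withDensity_congr_ae hdens]

end kingmanFixedPoint

lemma integral_id_of_eq_withDensity_add {μ Q : Measure ℝ} [IsProbabilityMeasure μ]
    [IsProbabilityMeasure Q] {b h : ℝ} (hb₀ : 0 ≤ b) (hb : b ≤ 1) (hh : 0 < h) (hμ : ∀ᵐ x ∂μ, 0 ≤ x)
    (hfix : μ = μ.withDensity (fun x => ENNReal.ofReal (x / h)) + ENNReal.ofReal b • Q) :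
    ∫ x, x ∂μ = (1 - b) * h := by
  have hf : Measurable fun x : ℝ => ENNReal.ofReal (x / h) := by fun_prop
  have hmass : ∫⁻ x, ENNReal.ofReal (x / h) ∂μ + ENNReal.ofReal b = 1 := by
    simpa [withDensity_apply _ MeasurableSet.univ] using (congrArg (· univ) hfix).symm
  have hlin : ∫⁻ x, ENNReal.ofReal (x / h) ∂μ = ENNReal.ofReal (1 - b) := by
    rw [ENNReal.ofReal_sub _ hb₀, ENNReal.ofReal_one, ← hmass, ENNReal.add_sub_cancel_right]
    simp
  have hdiv : ∫ x, x / h ∂μ = 1 - b := by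
    rw [integral_eq_lintegral_of_nonneg_ae (hμ.mono fun x hx => div_nonneg hx hh.le)
      (by fun_prop), hlin, ENNReal.toReal_ofReal (sub_nonneg.2 hb)]
  rw [← hdiv, integral_div, div_mul_cancel₀ _ hh.ne']

lemma kingmanMap_of_integral_eq {b h : ℝ} {Q u : Measure ℝ} (hb : b ≠ 1)
    (hmean : ∫ y, y ∂u = (1 - b) * h) :
    kingmanMap b Q u = u.withDensity (fun x => ENNReal.ofReal (x / h)) + ENNReal.ofReal b • Q := by
  simp_rw [kingmanMap, hmean, mul_div_mul_left _ h (sub_ne_zero.2 hb.symm)]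

theorem stmt_8 (b h : ℝ) (hb : b ∈ Set.Ioo (0:ℝ) 1) (hh : h ∈ Set.Ioc (0:ℝ) 1)
    (Q : Measure ℝ) (hQ : IsProbabilityMeasure Q)
    (hQsupp : Q (Set.Icc (0:ℝ) h)ᶜ = 0)
    (hint : ∫⁻ x, (ENNReal.ofReal (1 - x / h))⁻¹ ∂Q < ENNReal.ofReal b⁻¹) :
    IsProbabilityMeasure
        (Q.withDensity (fun x => ENNReal.ofReal b * (ENNReal.ofReal (1 - x / h))⁻¹)
          + (1 - ENNReal.ofReal b * ∫⁻ y, (ENNReal.ofReal (1 - y / h))⁻¹ ∂Q) • Measure.dirac h)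
      ∧ 0 < (Q.withDensity (fun x => ENNReal.ofReal b * (ENNReal.ofReal (1 - x / h))⁻¹)
          + (1 - ENNReal.ofReal b * ∫⁻ y, (ENNReal.ofReal (1 - y / h))⁻¹ ∂Q) • Measure.dirac h) {h}
      ∧ (∫ x, x ∂(Q.withDensity (fun x => ENNReal.ofReal b * (ENNReal.ofReal (1 - x / h))⁻¹)
          + (1 - ENNReal.ofReal b * ∫⁻ y, (ENNReal.ofReal (1 - y / h))⁻¹ ∂Q) • Measure.dirac h))
          = (1 - b) * h
      ∧ (Q.withDensity (fun x => ENNReal.ofReal b * (ENNReal.ofReal (1 - x / h))⁻¹)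
          + (1 - ENNReal.ofReal b * ∫⁻ y, (ENNReal.ofReal (1 - y / h))⁻¹ ∂Q) • Measure.dirac h)
        = kingmanMap b Q
            (Q.withDensity (fun x => ENNReal.ofReal b * (ENNReal.ofReal (1 - x / h))⁻¹)
              + (1 - ENNReal.ofReal b * ∫⁻ y, (ENNReal.ofReal (1 - y / h))⁻¹ ∂Q) • Measure.dirac h) := by
  obtain ⟨hb₀, hb₁⟩ := hb
  have hbI : ENNReal.ofReal b * ∫⁻ y, (ENNReal.ofReal (1 - y / h))⁻¹ ∂Q < 1 := by
    calc _ < ENNReal.ofReal b * ENNReal.ofReal b⁻¹ :=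
          ENNReal.mul_lt_mul_right (by simpa using hb₀) ENNReal.ofReal_ne_top hint
      _ = 1 := by rw [← ENNReal.ofReal_mul hb₀.le, mul_inv_cancel₀ hb₀.ne', ENNReal.ofReal_one]
  have hQ_Ico : ∀ᵐ x ∂Q, x ∈ Ico 0 h := by
    filter_upwards [measure_eq_zero_iff_ae_notMem.1 hQsupp,
      ae_lt_of_lintegral_inv_ofReal_one_sub_div_ne_top hh.1 (hint.trans_le le_top).ne]
      with x hx hxh
    exact ⟨(not_not.1 hx).1, hxh⟩
  have hprob : IsProbabilityMeasure (kingmanFixedPoint b h Q) := ⟨kingmanFixedPoint_univ hbI.le⟩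
  have hfix := kingmanFixedPoint_eq_withDensity_add (b := b) hh.1 hQ_Ico
  have hmean := integral_id_of_eq_withDensity_add hb₀.le hb₁.le hh.1
    (ae_nonneg_kingmanFixedPoint hh.1.le (hQ_Ico.mono fun x hx => hx.1)) hfix
  exact ⟨hprob, kingmanFixedPoint_singleton_pos hbI, hmean,
    hfix.trans (kingmanMap_of_integral_eq hb₁.ne hmean).symm⟩
end

section
/- (Kingman case 1, sign of the growth rate.) Let $b \in (0,1)$, $h \in (0,1]$, and $Q$ a probability measure supported in $[0,h]$ with $Q \ne \delta_0$, and suppose $\theta_b > (1-b)S_Q$ solves $\int\frac{b\theta_b Q(dx)}{\theta_b-(1-b)x} = 1$. If $\int \frac{Q(dx)}{1-x/h} \ge b^{-1}$ (with the convention that the integral is $+\infty$ if $Q(\{h\})>0$), then $h(1-b) \le \theta_b$, i.e. $\ln\frac{h(1-b)}{\int x\,\mathcal{K}_Q(dx)} \le 0$ where $\mathcal{K}_Q(dx) = \frac{b\theta_b Q(dx)}{\theta_b-(1-b)x}$; moreover equality $h(1-b) = \theta_b$ holds if and only if $\int \frac{Q(dx)}{1-x/h} = b^{-1}$. -/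
/-!
With `a = 1 - b`, let `Φ θ = ∫ Q(dx) / (1 - a x / θ) ∈ [0, ∞]`. The equation for `θ_b` says
`Φ θ_b = b⁻¹`, while `Φ (h a) = ∫ Q(dx) / (1 - x / h)`. As `Q` lives on `[0, h]` and charges
`(0, h]`, the map `Φ` is strictly decreasing wherever it is finite, so `b⁻¹ ≤ Φ (h a)` forces
`h a ≤ θ_b`, with equality exactly when `Φ (h a) = b⁻¹`.
-/

open MeasureTheory Set ENNReal

/-- Extended-real form of `θ / (θ - a x)`: it is `∞`, not a junk value, once `a x ≥ θ`, which
matches the convention `∫ Q(dx) / (1 - x/h) = ∞` when `Q {h} > 0`. -/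
noncomputable def kingmanWeight (a θ x : ℝ) : ℝ≥0∞ :=
  (ENNReal.ofReal (1 - a * x / θ))⁻¹

section kingmanWeight

variable {a θ θ₁ θ₂ x : ℝ}

@[fun_prop]
lemma measurable_kingmanWeight : Measurable (kingmanWeight a θ) := by
  unfold kingmanWeight; fun_prop

lemma kingmanWeight_eq_ofReal (hθ : 0 < θ) (hx : a * x < θ) :
    kingmanWeight a θ x = ENNReal.ofReal (θ / (θ - a * x)) := by
  have hpos : 0 < 1 - a * x / θ := by rw [sub_pos, div_lt_one hθ]; exact hx
  rw [kingmanWeight, ← ENNReal.ofReal_inv_of_pos hpos]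
  congr 1
  field_simp

lemma kingmanWeight_mul_right (ha : a ≠ 0) (h : ℝ) :
    kingmanWeight a (h * a) x = (ENNReal.ofReal (1 - x / h))⁻¹ := by
  rw [kingmanWeight, mul_comm a x, mul_div_mul_right x h ha]

lemma kingmanWeight_lt_top_iff (hθ : 0 < θ) : kingmanWeight a θ x < ∞ ↔ a * x < θ := by
  rw [kingmanWeight, ENNReal.inv_lt_top, ENNReal.ofReal_pos, sub_pos, div_lt_one hθ]

lemma kingmanWeight_anti (ha : 0 ≤ a) (hx : 0 ≤ x) (hθ₁ : 0 < θ₁) (hθ : θ₁ ≤ θ₂) :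
    kingmanWeight a θ₂ x ≤ kingmanWeight a θ₁ x := by
  refine ENNReal.inv_le_inv.2 (ENNReal.ofReal_le_ofReal ?_)
  gcongr

lemma kingmanWeight_strictAnti (ha : 0 < a) (hx : 0 < x) (hθ₁ : 0 < θ₁) (hθ : θ₁ < θ₂)
    (hx₂ : a * x < θ₂) : kingmanWeight a θ₂ x < kingmanWeight a θ₁ x := by
  refine ENNReal.inv_lt_inv.2 ((ENNReal.ofReal_lt_ofReal_iff ?_).2 ?_)
  · rw [sub_pos, div_lt_one (hθ₁.trans hθ)]; exact hx₂
  · gcongr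

lemma lintegral_kingmanWeight_lt {μ : Measure ℝ} (ha : 0 < a) (hθ₁ : 0 < θ₁) (hθ : θ₁ < θ₂)
    (hnonneg : ∀ᵐ x ∂μ, 0 ≤ x) (hpos : ∃ᵐ x ∂μ, 0 < x)
    (hfin : ∫⁻ x, kingmanWeight a θ₁ x ∂μ ≠ ∞) :
    ∫⁻ x, kingmanWeight a θ₂ x ∂μ < ∫⁻ x, kingmanWeight a θ₁ x ∂μ := by
  have hle : ∀ᵐ x ∂μ, kingmanWeight a θ₂ x ≤ kingmanWeight a θ₁ x :=
    hnonneg.mono fun x hx ↦ kingmanWeight_anti ha.le hx hθ₁ hθ.le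
  have hlt : ∀ᵐ x ∂μ, a * x < θ₂ :=
    (ae_lt_top measurable_kingmanWeight hfin).mono fun x hx ↦
      ((kingmanWeight_lt_top_iff hθ₁).1 hx).trans hθ
  refine lintegral_strict_mono_of_ae_le_of_frequently_ae_lt measurable_kingmanWeight.aemeasurable
    (ne_top_of_le_ne_top hfin (lintegral_mono_ae hle)) hle ?_
  exact (hpos.and_eventually hlt).mono fun x ⟨hx, hx₂⟩ ↦
    (kingmanWeight_strictAnti ha hx hθ₁ hθ hx₂).ne

lemma le_of_lintegral_kingmanWeight_le {μ : Measure ℝ} (ha : 0 < a) (hθ₁ : 0 < θ₁)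
    (hnonneg : ∀ᵐ x ∂μ, 0 ≤ x) (hpos : ∃ᵐ x ∂μ, 0 < x)
    (hfin : ∫⁻ x, kingmanWeight a θ₁ x ∂μ ≠ ∞)
    (hle : ∫⁻ x, kingmanWeight a θ₁ x ∂μ ≤ ∫⁻ x, kingmanWeight a θ₂ x ∂μ) : θ₂ ≤ θ₁ := by
  by_contra! hθ
  exact (lintegral_kingmanWeight_lt ha hθ₁ hθ hnonneg hpos hfin).not_ge hle

lemma eq_of_lintegral_kingmanWeight_eq {μ : Measure ℝ} (ha : 0 < a) (hθ₁ : 0 < θ₁) (hθ₂ : 0 < θ₂)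
    (hnonneg : ∀ᵐ x ∂μ, 0 ≤ x) (hpos : ∃ᵐ x ∂μ, 0 < x)
    (hfin : ∫⁻ x, kingmanWeight a θ₁ x ∂μ ≠ ∞)
    (heq : ∫⁻ x, kingmanWeight a θ₁ x ∂μ = ∫⁻ x, kingmanWeight a θ₂ x ∂μ) : θ₁ = θ₂ :=
  le_antisymm (le_of_lintegral_kingmanWeight_le ha hθ₂ hnonneg hpos (heq ▸ hfin) heq.ge)
    (le_of_lintegral_kingmanWeight_le ha hθ₁ hnonneg hpos hfin heq.le)

end kingmanWeight

lemma ae_le_sSup_of_ae_le_one {μ : Measure ℝ} (h1 : ∀ᵐ x ∂μ, x ≤ 1) :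
    ∀ᵐ x ∂μ, x ≤ sSup {x : ℝ | 0 < μ (Icc x 1)} := by
  set S := sSup {x : ℝ | 0 < μ (Icc x 1)}
  have hbdd : BddAbove {x : ℝ | 0 < μ (Icc x 1)} := ⟨1, fun x hx ↦ by
    by_contra! h1x
    simp [Icc_eq_empty_of_lt h1x] at hx⟩
  have hnull : ∀ n : ℕ, μ (Icc (S + 1 / (n + 1)) 1) = 0 := fun n ↦ by
    by_contra hn
    have := le_csSup hbdd (pos_iff_ne_zero.2 hn)
    have : (0 : ℝ) < 1 / (n + 1) := by positivity
    linarith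
  filter_upwards [h1, measure_eq_zero_iff_ae_notMem.1 (measure_iUnion_null hnull)] with x hx1 hx
  by_contra! hSx
  obtain ⟨n, hn⟩ := exists_nat_one_div_lt (sub_pos.2 hSx)
  exact hx (mem_iUnion.2 ⟨n, by linarith, hx1⟩)

lemma frequently_pos_of_ne_dirac_zero {μ : Measure ℝ} [IsProbabilityMeasure μ]
    (hμ : μ ≠ Measure.dirac 0) (hnonneg : ∀ᵐ x ∂μ, 0 ≤ x) : ∃ᵐ x ∂μ, 0 < x := by
  refine fun hnot ↦ hμ ?_
  have hzero : (id : ℝ → ℝ) =ᵐ[μ] fun _ ↦ 0 := by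
    filter_upwards [hnonneg, hnot] with x hx hx' using le_antisymm (not_lt.1 hx') hx
  rw [← Measure.map_id (μ := μ), Measure.map_congr hzero, Measure.map_const, measure_univ, one_smul]

lemma lintegral_kingmanWeight_eq_ofReal_inv {μ : Measure ℝ} {a b θ : ℝ} (hθ : 0 < θ)
    (hlt : ∀ᵐ x ∂μ, a * x < θ) (hsol : ∫ x, b * θ / (θ - a * x) ∂μ = 1) :
    ∫⁻ x, kingmanWeight a θ x ∂μ = ENNReal.ofReal b⁻¹ := by
  simp_rw [mul_div_assoc, integral_const_mul] at hsol
  have hint : Integrable (fun x ↦ θ / (θ - a * x)) μ :=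
    Integrable.of_integral_ne_zero (right_ne_zero_of_mul_eq_one hsol)
  rw [← eq_inv_of_mul_eq_one_right hsol, ofReal_integral_eq_lintegral_ofReal hint
    (hlt.mono fun x hx ↦ (div_pos hθ (sub_pos.2 hx)).le)]
  exact lintegral_congr_ae (hlt.mono fun x hx ↦ kingmanWeight_eq_ofReal hθ hx)

theorem stmt_10 (b h : ℝ) (hb : b ∈ Set.Ioo (0:ℝ) 1) (hh : h ∈ Set.Ioc (0:ℝ) 1)
    (Q : Measure ℝ) (hQ : IsProbabilityMeasure Q)
    (hQsupp : Q (Set.Icc (0:ℝ) h)ᶜ = 0) (hQne : Q ≠ Measure.dirac 0)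
    (S : ℝ) (hS : sSup {x : ℝ | 0 < Q (Set.Icc x 1)} = S)
    (θb : ℝ) (hθ : (1 - b) * S < θb)
    (hsol : (∫ x, b * θb / (θb - (1 - b) * x) ∂Q) = 1)
    (hcond : ENNReal.ofReal b⁻¹ ≤ ∫⁻ x, (ENNReal.ofReal (1 - x / h))⁻¹ ∂Q) :
    h * (1 - b) ≤ θb
      ∧ Real.log (h * (1 - b) / θb) ≤ 0
      ∧ (h * (1 - b) = θb
          ↔ (∫⁻ x, (ENNReal.ofReal (1 - x / h))⁻¹ ∂Q) = ENNReal.ofReal b⁻¹) := by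
  obtain ⟨-, hb1⟩ := hb
  obtain ⟨hh0, hh1⟩ := hh
  have ha : 0 < 1 - b := sub_pos.2 hb1
  have hsupp : ∀ᵐ x ∂Q, x ∈ Icc 0 h := measure_eq_zero_iff_ae_notMem.1 hQsupp |>.mono
    fun x hx ↦ not_not.1 hx
  have hnonneg : ∀ᵐ x ∂Q, 0 ≤ x := hsupp.mono fun x hx ↦ hx.1
  have hleS : ∀ᵐ x ∂Q, x ≤ S :=
    hS ▸ ae_le_sSup_of_ae_le_one (hsupp.mono fun x hx ↦ hx.2.trans hh1)
  obtain ⟨x₀, hx₀, hx₀S⟩ := (hnonneg.and hleS).exists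
  have hθb : 0 < θb := (mul_nonneg ha.le (hx₀.trans hx₀S)).trans_lt hθ
  have hlt : ∀ᵐ x ∂Q, (1 - b) * x < θb :=
    hleS.mono fun x hx ↦ (mul_le_mul_of_nonneg_left hx ha.le).trans_lt hθ
  have hθb_eq : ∫⁻ x, kingmanWeight (1 - b) θb x ∂Q = ENNReal.ofReal b⁻¹ :=
    lintegral_kingmanWeight_eq_ofReal_inv hθb hlt hsol
  have hh_eq : ∫⁻ x, kingmanWeight (1 - b) (h * (1 - b)) x ∂Q =
      ∫⁻ x, (ENNReal.ofReal (1 - x / h))⁻¹ ∂Q := by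
    simp only [kingmanWeight_mul_right ha.ne']
  have hpos := frequently_pos_of_ne_dirac_zero hQne hnonneg
  have hfin : ∫⁻ x, kingmanWeight (1 - b) θb x ∂Q ≠ ∞ := hθb_eq ▸ ofReal_ne_top
  rw [← hh_eq, ← hθb_eq] at hcond ⊢
  have hle : h * (1 - b) ≤ θb :=
    le_of_lintegral_kingmanWeight_le ha hθb hnonneg hpos hfin hcond
  refine ⟨hle, Real.log_nonpos (by positivity) ((div_le_one hθb).2 hle), fun heq ↦ heq ▸ rfl,
    fun heq ↦ (eq_of_lintegral_kingmanWeight_eq ha hθb (by positivity) hnonneg hpos hfin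
      heq.symm).symm⟩
end

section
/- Let $h \in (0,1]$, $Q = \delta_0$, and let $(\beta_n)_{n \ge 1}$ be $[0,1)$-valued i.i.d. random variables with common law $\mathcal{L}$. Let $P_0$ be a probability measure on $[0,1]$ with essential supremum $h$ and positive mean, and define $P_n(dx) = (1-\beta_n)\frac{x P_{n-1}(dx)}{\int y P_{n-1}(dy)} + \beta_n \delta_0(dx)$. Then for every $n \ge 1$, $P_n(dx) = (1-\beta_n)\frac{x^n P_0(dx)}{\int y^n P_0(dy)} + \beta_n\delta_0(dx)$, and $(P_n)$ converges weakly in distribution to the random measure $(1-\beta)\delta_h + \beta\,\delta_0$, where $\beta$ has law $\mathcal{L}$. -/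
open MeasureTheory Set Filter ProbabilityTheory Topology

/-!
Size-biasing `xⁿ P₀(dx)` by `x` gives a multiple of `xⁿ⁺¹ P₀(dx)` and annihilates the atom at `0`,
so by induction `Pₙ` is the mixture of `xⁿ P₀ / ∫ yⁿ dP₀` and `δ₀` with weights `1 - βₙ`, `βₙ`.
Since `P₀` lives on `[0, h]` and charges every `[b, h]` with `b < h`, these normalized measures
concentrate at `h`: for `a < b < h` their mass on `[0, a]` is at most `aⁿ / (bⁿ P₀[b, h]) → 0`.
Hence `∫ f dPₙ = (1 - βₙ) rₙ + βₙ f 0` with `rₙ → f h`; as every `βₙ` has law `L`,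
`E g(∫ f dPₙ) = ∫ g((1 - t) rₙ + t f 0) L(dt)`, which converges by dominated convergence.
-/

lemma Continuous.integrable_of_ae_mem_isCompact {X : Type*} [TopologicalSpace X] [T2Space X]
    [MeasurableSpace X] [OpensMeasurableSpace X] {μ : Measure X} [IsFiniteMeasure μ]
    {K : Set X} (hK : IsCompact K) (hμ : ∀ᵐ x ∂μ, x ∈ K) {φ : X → ℝ} (hφ : Continuous φ) :
    Integrable φ μ := by
  rw [← Measure.restrict_eq_self_of_ae_mem hμ]
  exact hφ.continuousOn.integrableOn_compact hK

section Moments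

variable {μ : Measure ℝ} [IsFiniteMeasure μ] {c : ℝ}

lemma integrable_pow_of_ae_mem_Icc (hμ : ∀ᵐ x ∂μ, x ∈ Icc 0 c) (n : ℕ) :
    Integrable (fun x : ℝ => x ^ n) μ :=
  (continuous_pow n).integrable_of_ae_mem_isCompact isCompact_Icc hμ

lemma pow_mul_measureReal_Ici_le_integral_pow (hμ : ∀ᵐ x ∂μ, x ∈ Icc 0 c) {b : ℝ} (hb : 0 ≤ b)
    (n : ℕ) : b ^ n * μ.real (Ici b) ≤ ∫ x, x ^ n ∂μ :=
  calc b ^ n * μ.real (Ici b) ≤ b ^ n * μ.real {x | b ^ n ≤ x ^ n} := by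
        gcongr
        · finiteness
        · exact fun x hx => pow_le_pow_left₀ hb hx n
    _ ≤ ∫ x, x ^ n ∂μ := mul_meas_ge_le_integral_of_nonneg
        (hμ.mono fun x hx => pow_nonneg hx.1 n) (integrable_pow_of_ae_mem_Icc hμ n) _

lemma integral_pow_pos (hμ : ∀ᵐ x ∂μ, x ∈ Icc 0 c) {b : ℝ} (hb : 0 < b) (hμb : 0 < μ (Ici b))
    (n : ℕ) : 0 < ∫ x, x ^ n ∂μ := by
  have : 0 < μ.real (Ici b) := ENNReal.toReal_pos hμb.ne' (measure_ne_top _ _)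
  exact (mul_pos (pow_pos hb n) this).trans_le
    (pow_mul_measureReal_Ici_le_integral_pow hμ hb.le n)

end Moments

section EssentialSupremum

variable {μ : Measure ℝ} {h : ℝ}

lemma measure_Ici_pos_of_lt_sSup (hS : sSup {x : ℝ | 0 < μ (Icc x 1)} = h) (hh : 0 < h)
    {b : ℝ} (hb : b < h) : 0 < μ (Ici b) := by
  have hne : {x : ℝ | 0 < μ (Icc x 1)}.Nonempty := by
    by_contra hempty
    rw [not_nonempty_iff_eq_empty.1 hempty, Real.sSup_empty] at hS
    exact hh.ne hS
  obtain ⟨a, ha, hba⟩ := exists_lt_of_lt_csSup hne (hS ▸ hb)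
  exact ha.trans_le (measure_mono fun x hx => le_trans hba.le hx.1)

lemma ae_mem_Icc_of_sSup (hμ : μ (Icc 0 1)ᶜ = 0) (hS : sSup {x : ℝ | 0 < μ (Icc x 1)} = h) :
    ∀ᵐ x ∂μ, x ∈ Icc 0 h := by
  have hbdd : BddAbove {x : ℝ | 0 < μ (Icc x 1)} := by
    refine ⟨1, fun x hx => not_lt.1 fun h1 => ?_⟩
    simp [Icc_eq_empty_of_lt h1] at hx
  have hnull : ∀ b, h < b → μ (Icc b 1) = 0 := fun b hb => by
    have := notMem_of_csSup_lt (hS ▸ hb) hbdd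
    simpa using this
  have hIoc : μ (Ioc h 1) = 0 := by
    refine measure_mono_null (fun x hx => ?_) (measure_iUnion_null fun k : ℕ =>
      hnull (h + 1 / (k + 1)) (lt_add_of_pos_right h Nat.one_div_pos_of_nat))
    obtain ⟨k, hk⟩ := exists_nat_one_div_lt (sub_pos.2 hx.1)
    exact mem_iUnion.2 ⟨k, by linarith, hx.2⟩
  filter_upwards [mem_ae_iff.2 hμ, measure_eq_zero_iff_ae_notMem.1 hIoc] with x hx hxh
  exact ⟨hx.1, not_lt.1 fun hlt => hxh ⟨hlt, hx.2⟩⟩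

end EssentialSupremum

section Concentration

variable {μ : Measure ℝ} [IsFiniteMeasure μ] {h : ℝ} {f : ℝ → ℝ}

lemma abs_integral_mul_pow_sub_le (hμ : ∀ᵐ x ∂μ, x ∈ Icc 0 h) (hf : Continuous f)
    {a ε C : ℝ} (ha : 0 ≤ a) (hε : 0 ≤ ε) (hC : ∀ x ∈ Icc 0 h, |f x - f h| ≤ C)
    (hfε : ∀ x ∈ Ioc a h, |f x - f h| ≤ ε) (n : ℕ) :
    |(∫ x, f x * x ^ n ∂μ) - f h * ∫ x, x ^ n ∂μ|
      ≤ ε * (∫ x, x ^ n ∂μ) + C * a ^ n * μ.real univ := by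
  have hpow := integrable_pow_of_ae_mem_Icc hμ n
  have hfpow : Integrable (fun x => f x * x ^ n) μ :=
    (hf.mul (continuous_pow n)).integrable_of_ae_mem_isCompact isCompact_Icc hμ
  have hpointwise : ∀ᵐ x ∂μ, ‖(f x - f h) * x ^ n‖ ≤ ε * x ^ n + C * a ^ n := by
    filter_upwards [hμ] with x hx
    have hxn : 0 ≤ x ^ n := pow_nonneg hx.1 n
    have hCx := hC x hx
    rw [norm_mul, Real.norm_eq_abs, Real.norm_eq_abs, abs_of_nonneg hxn]
    rcases le_or_gt x a with hxa | hax
    · have := mul_le_mul hCx (pow_le_pow_left₀ hx.1 hxa n) hxn ((abs_nonneg _).trans hCx)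
      nlinarith
    · have := mul_le_mul_of_nonneg_right (hfε x ⟨hax, hx.2⟩) hxn
      nlinarith [pow_nonneg ha n, (abs_nonneg _).trans hCx]
  calc |(∫ x, f x * x ^ n ∂μ) - f h * ∫ x, x ^ n ∂μ|
      = ‖∫ x, (f x - f h) * x ^ n ∂μ‖ := by
        simp_rw [sub_mul]
        rw [integral_sub hfpow (hpow.const_mul _), integral_const_mul, Real.norm_eq_abs]
    _ ≤ ∫ x, (ε * x ^ n + C * a ^ n) ∂μ :=
        norm_integral_le_of_norm_le ((hpow.const_mul _).add (integrable_const _)) hpointwise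
    _ = ε * (∫ x, x ^ n ∂μ) + C * a ^ n * μ.real univ := by
        rw [integral_add (hpow.const_mul _) (integrable_const _), integral_const_mul,
          integral_const, smul_eq_mul, mul_comm (μ.real univ)]

theorem tendsto_integral_mul_pow_div_integral_pow (hh : 0 < h) (hμ : ∀ᵐ x ∂μ, x ∈ Icc 0 h)
    (hμh : ∀ b < h, 0 < μ (Ici b)) (hf : Continuous f) :
    Tendsto (fun n : ℕ => (∫ x, f x * x ^ n ∂μ) / ∫ x, x ^ n ∂μ) atTop (𝓝 (f h)) := by
  obtain ⟨C, hC⟩ := isCompact_Icc.exists_bound_of_continuousOn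
    ((hf.sub continuous_const).continuousOn : ContinuousOn (fun x => f x - f h) (Icc 0 h))
  rw [Metric.tendsto_atTop]
  intro ε hε
  obtain ⟨δ, hδ, hfδ⟩ := Metric.continuousAt_iff.1 hf.continuousAt (ε / 2) (half_pos hε)
  obtain ⟨a, ha, hδa, hah⟩ : ∃ a, 0 ≤ a ∧ h - δ ≤ a ∧ a < h :=
    ⟨max (h - δ) 0, le_max_right _ _, le_max_left _ _, max_lt (by linarith) hh⟩
  obtain ⟨b, hab, hbh⟩ := exists_between hah
  have hb : 0 < b := ha.trans_lt hab
  have hfε : ∀ x ∈ Ioc a h, |f x - f h| ≤ ε / 2 := fun x hx => by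
    refine (hfδ ?_).le
    rw [Real.dist_eq, abs_sub_lt_iff]
    constructor <;> linarith [hx.1, hx.2]
  have hμb : 0 < μ.real (Ici b) := ENNReal.toReal_pos (hμh b hbh).ne' (measure_ne_top _ _)
  set D := C * μ.real univ / μ.real (Ici b)
  have hgeom : Tendsto (fun n : ℕ => D * (a / b) ^ n) atTop (𝓝 0) := by
    simpa using (tendsto_pow_atTop_nhds_zero_of_lt_one (by positivity)
      ((div_lt_one hb).2 hab)).const_mul D
  obtain ⟨N, hN⟩ := eventually_atTop.1 (hgeom.eventually_lt_const (half_pos hε))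
  refine ⟨N, fun n hn => ?_⟩
  have hMlb := pow_mul_measureReal_Ici_le_integral_pow hμ hb.le n
  have hM : 0 < ∫ x, x ^ n ∂μ := (mul_pos (pow_pos hb n) hμb).trans_le hMlb
  have hbound := abs_integral_mul_pow_sub_le hμ hf ha (half_pos hε).le
    (fun x hx => by simpa using hC x hx) hfε n
  have hC0 : 0 ≤ C := (norm_nonneg _).trans (hC h ⟨hh.le, le_rfl⟩)
  have htail : C * a ^ n * μ.real univ ≤ D * (a / b) ^ n * ∫ x, x ^ n ∂μ :=
    calc C * a ^ n * μ.real univ = D * (a / b) ^ n * (b ^ n * μ.real (Ici b)) := by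
          simp only [D, div_pow]; field_simp
      _ ≤ D * (a / b) ^ n * ∫ x, x ^ n ∂μ := by gcongr
  have hsmall := mul_lt_mul_of_pos_right (hN n hn) hM
  rw [Real.dist_eq, div_sub' hM.ne', abs_div, abs_of_pos hM, div_lt_iff₀ hM, mul_comm _ (f h)]
  linarith

end Concentration

noncomputable def powerTiltMix (μ : Measure ℝ) (n : ℕ) (b : ℝ) : Measure ℝ :=
  μ.withDensity (fun x => ENNReal.ofReal ((1 - b) * x ^ n / ∫ y, y ^ n ∂μ))
    + ENNReal.ofReal b • Measure.dirac 0

section PowerTiltMix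

variable {μ : Measure ℝ} {c : ℝ}

lemma powerTiltMix_zero_zero [IsProbabilityMeasure μ] : powerTiltMix μ 0 0 = μ := by
  simp [powerTiltMix]

variable [IsFiniteMeasure μ]

lemma integral_powerTiltMix (hμ : ∀ᵐ x ∂μ, x ∈ Icc 0 c) {b : ℝ} (hb₀ : 0 ≤ b) (hb₁ : b ≤ 1)
    {φ : ℝ → ℝ} (hφ : Continuous φ) (n : ℕ) :
    ∫ x, φ x ∂powerTiltMix μ n b
      = (1 - b) * ((∫ x, φ x * x ^ n ∂μ) / ∫ x, x ^ n ∂μ) + b * φ 0 := by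
  set M := ∫ x, x ^ n ∂μ
  have hM : 0 ≤ M := integral_nonneg_of_ae (hμ.mono fun x hx => pow_nonneg hx.1 n)
  have hdens : Measurable fun x : ℝ => ENNReal.ofReal ((1 - b) * x ^ n / M) := by fun_prop
  have hfin : ∀ᵐ x ∂μ, ENNReal.ofReal ((1 - b) * x ^ n / M) < ⊤ :=
    ae_of_all _ fun _ => ENNReal.ofReal_lt_top
  have hsmul : (fun x => (ENNReal.ofReal ((1 - b) * x ^ n / M)).toReal • φ x)
      =ᵐ[μ] fun x => (1 - b) / M * (φ x * x ^ n) := by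
    filter_upwards [hμ] with x hx
    rw [ENNReal.toReal_ofReal (by have := pow_nonneg hx.1 n; positivity), smul_eq_mul]
    ring
  have hint : Integrable (fun x => (1 - b) / M * (φ x * x ^ n)) μ :=
    ((hφ.mul (continuous_pow n)).integrable_of_ae_mem_isCompact isCompact_Icc hμ).const_mul _
  rw [powerTiltMix, integral_add_measure
      ((integrable_withDensity_iff_integrable_smul' hdens hfin).2 (hint.congr hsmul.symm))
      ((integrable_dirac (by simp)).smul_measure ENNReal.ofReal_ne_top),
    integral_withDensity_eq_integral_toReal_smul hdens hfin, integral_congr_ae hsmul,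
    integral_const_mul, integral_smul_measure, integral_dirac, ENNReal.toReal_ofReal hb₀,
    smul_eq_mul]
  ring

lemma powerTiltMix_succ (hμ : ∀ᵐ x ∂μ, x ∈ Icc 0 c) {b : ℝ} (hb₀ : 0 ≤ b) (hb₁ : b < 1)
    {n : ℕ} (hMn : 0 < ∫ x, x ^ n ∂μ) (hMn₁ : 0 < ∫ x, x ^ (n + 1) ∂μ) (b' : ℝ) :
    (powerTiltMix μ n b).withDensity
        (fun x => ENNReal.ofReal ((1 - b') * x / ∫ y, y ∂powerTiltMix μ n b))
      + ENNReal.ofReal b' • Measure.dirac 0 = powerTiltMix μ (n + 1) b' := by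
  have hmean : ∫ y, y ∂powerTiltMix μ n b
      = (1 - b) * ((∫ x, x ^ (n + 1) ∂μ) / ∫ x, x ^ n ∂μ) := by
    rw [integral_powerTiltMix hμ hb₀ hb₁.le (φ := fun x => x) continuous_id n]
    simp_rw [← pow_succ', mul_zero, add_zero]
  rw [hmean, powerTiltMix, withDensity_add_measure, withDensity_smul_measure,
    dirac_withDensity]
  simp only [mul_zero, zero_div, ENNReal.ofReal_zero, zero_smul, smul_zero, add_zero]
  rw [← withDensity_mul _ (by fun_prop) (by fun_prop), powerTiltMix]
  congr 1
  refine withDensity_congr_ae ?_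
  filter_upwards [hμ] with x hx
  rw [Pi.mul_apply, ← ENNReal.ofReal_mul (by have := pow_nonneg hx.1 n; positivity)]
  have : 1 - b ≠ 0 := (sub_pos.2 hb₁).ne'
  congr 1
  field_simp
  ring

end PowerTiltMix

lemma BoundedContinuousFunction.continuous_integral_comp_affine
    (g : BoundedContinuousFunction ℝ ℝ) (L : Measure ℝ) [IsFiniteMeasure L] (c : ℝ) :
    Continuous fun s => ∫ t, g ((1 - t) * s + t * c) ∂L :=
  continuous_of_dominated (fun _ => by fun_prop)
    (fun _ => ae_of_all _ fun _ => g.norm_coe_le_norm _) (integrable_const ‖g‖)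
    (ae_of_all _ fun _ => by fun_prop)

theorem stmt_14_general {Ω : Type*} [MeasurableSpace Ω] (μpr : Measure Ω)
    (h : ℝ) (hh : h ∈ Set.Ioc (0:ℝ) 1)
    (L : Measure ℝ) (hL : IsProbabilityMeasure L)
    (β : ℕ → Ω → ℝ) (hβm : ∀ n, Measurable (β n))
    (hβr : ∀ n ω, β n ω ∈ Set.Ico (0:ℝ) 1)
    (hlaw : ∀ n, Measure.map (β n) μpr = L)
    (P₀ : Measure ℝ) (hP₀ : IsProbabilityMeasure P₀) (hP₀supp : P₀ (Set.Icc (0:ℝ) 1)ᶜ = 0)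
    (hS : sSup {x : ℝ | 0 < P₀ (Set.Icc x 1)} = h)
    (P : ℕ → Ω → Measure ℝ) (hP0 : ∀ ω, P 0 ω = P₀)
    (hrec : ∀ n, 1 ≤ n → ∀ ω, P n ω
      = (P (n-1) ω).withDensity
          (fun x => ENNReal.ofReal ((1 - β n ω) * x / ∫ y, y ∂P (n-1) ω))
        + ENNReal.ofReal (β n ω) • Measure.dirac 0) :
    (∀ n, 1 ≤ n → ∀ ω, P n ω
        = P₀.withDensity
            (fun x => ENNReal.ofReal ((1 - β n ω) * x ^ n / ∫ y, y ^ n ∂P₀))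
          + ENNReal.ofReal (β n ω) • Measure.dirac 0)
      ∧ (∀ f : ℝ → ℝ, Continuous f → ∀ g : BoundedContinuousFunction ℝ ℝ,
          Tendsto (fun n : ℕ => ∫ ω, g (∫ x, f x ∂P n ω) ∂μpr) atTop
            (nhds (∫ t, g ((1 - t) * f h + t * f 0) ∂L))) := by
  have hP₀h : ∀ᵐ x ∂P₀, x ∈ Icc 0 h := ae_mem_Icc_of_sSup hP₀supp hS
  have hP₀pos : ∀ b < h, 0 < P₀ (Ici b) := fun b => measure_Ici_pos_of_lt_sSup hS hh.1
  have hM : ∀ n, 0 < ∫ y, y ^ n ∂P₀ := integral_pow_pos hP₀h (half_pos hh.1)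
    (hP₀pos _ (half_lt_self hh.1))
  have hclosed : ∀ n, 1 ≤ n → ∀ ω, P n ω = powerTiltMix P₀ n (β n ω) := by
    intro n hn ω
    induction n, hn using Nat.le_induction with
    | base =>
      have hstep := powerTiltMix_succ hP₀h le_rfl one_pos (hM 0) (hM 1) (β 1 ω)
      rw [powerTiltMix_zero_zero] at hstep
      rw [hrec 1 le_rfl, hP0]
      exact hstep
    | succ n hn ih =>
      rw [hrec (n + 1) (by omega), Nat.add_sub_cancel, ih,
        powerTiltMix_succ hP₀h (hβr n ω).1 (hβr n ω).2 (hM n) (hM (n + 1))]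
  refine ⟨hclosed, fun f hf g => ?_⟩
  refine ((g.continuous_integral_comp_affine L (f 0)).tendsto (f h) |>.comp
    (tendsto_integral_mul_pow_div_integral_pow hh.1 hP₀h hP₀pos hf)).congr' ?_
  filter_upwards [eventually_ge_atTop 1] with n hn
  have hcont : Continuous fun t : ℝ =>
      g ((1 - t) * ((∫ x, f x * x ^ n ∂P₀) / ∫ x, x ^ n ∂P₀) + t * f 0) := by fun_prop
  rw [Function.comp_apply, ← hlaw n,
    integral_map (hβm n).aemeasurable hcont.aestronglyMeasurable]
  refine integral_congr_ae (ae_of_all _ fun ω => ?_)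
  dsimp only
  rw [hclosed n hn ω, integral_powerTiltMix hP₀h (hβr n ω).1 (hβr n ω).2.le hf]

theorem stmt_14 {Ω : Type*} [MeasurableSpace Ω] (μpr : Measure Ω) [IsProbabilityMeasure μpr]
    (h : ℝ) (hh : h ∈ Set.Ioc (0:ℝ) 1)
    (L : Measure ℝ) (hL : IsProbabilityMeasure L) (hLsupp : L (Set.Ico (0:ℝ) 1)ᶜ = 0)
    (β : ℕ → Ω → ℝ) (hβm : ∀ n, Measurable (β n))
    (hβr : ∀ n ω, β n ω ∈ Set.Ico (0:ℝ) 1)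
    (hiid : iIndepFun β μpr)
    (hlaw : ∀ n, Measure.map (β n) μpr = L)
    (P₀ : Measure ℝ) (hP₀ : IsProbabilityMeasure P₀) (hP₀supp : P₀ (Set.Icc (0:ℝ) 1)ᶜ = 0)
    (hS : sSup {x : ℝ | 0 < P₀ (Set.Icc x 1)} = h) (hmean : 0 < ∫ y, y ∂P₀)
    (P : ℕ → Ω → Measure ℝ) (hP0 : ∀ ω, P 0 ω = P₀)
    (hmeanP : ∀ n ω, 0 < ∫ y, y ∂P n ω)
    (hrec : ∀ n, 1 ≤ n → ∀ ω, P n ω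
      = (P (n-1) ω).withDensity
          (fun x => ENNReal.ofReal ((1 - β n ω) * x / ∫ y, y ∂P (n-1) ω))
        + ENNReal.ofReal (β n ω) • Measure.dirac 0) :
    (∀ n, 1 ≤ n → ∀ ω, P n ω
        = P₀.withDensity
            (fun x => ENNReal.ofReal ((1 - β n ω) * x ^ n / ∫ y, y ^ n ∂P₀))
          + ENNReal.ofReal (β n ω) • Measure.dirac 0)
      ∧ (∀ f : ℝ → ℝ, Continuous f → ∀ g : BoundedContinuousFunction ℝ ℝ,
          Tendsto (fun n : ℕ => ∫ ω, g (∫ x, f x ∂P n ω) ∂μpr) atTop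
            (nhds (∫ t, g ((1 - t) * f h + t * f 0) ∂L))) :=
  stmt_14_general μpr h hh L hL β hβm hβr hlaw P₀ hP₀ hP₀supp hS P hP0 hrec
end

section
/- (Backward expansion at the top.) In the setting of the finite backward sequence with $P_n^n = \delta_h$, $Q$ supported in $[0,h]$ with $Q(\{h\}) = 0$ and all moments $m_j = \int x^j Q(dx) > 0$, one has for all $n \ge 1$: $P_0^n(dx) = \Big(\prod_{l=1}^n \frac{h(1-b_l)}{\int y P_l^n(dy)}\Big)\delta_h(dx) + \sum_{j=0}^{n-1}\Big(\prod_{l=1}^{j}\frac{1-b_l}{\int y P_l^n(dy)}\Big) b_{j+1}\, m_j\, Q^j(dx)$, where $Q^j(dx) = x^j Q(dx)/m_j$. In particular $P_0^n(\{h\}) = \prod_{l=1}^n \frac{h(1-b_l)}{\int y P_l^n(dy)}$. -/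
open MeasureTheory Set

/-!
The selection step of `kingmanMap` reweights a measure by `w x` with `w = (1 - b) / mean`. On
`δ_h` this multiplies by `w h`, and, since `Q` lives on `[0, ∞)`, it sends `x ^ k Q(dx)` to
`w • x ^ (k + 1) Q(dx)`; the mutation step adds `b • Q = b • x ^ 0 Q(dx)`. Unrolling from
`P_n^n = δ_h` thus expands `P_0^n` in the unnormalized measures `x ^ j Q(dx) = m_j Q^j`, and as
`Q {h} = 0` only the Dirac part charges `{h}`.
-/

theorem Finset.prod_Icc_one_succ {M : Type*} [CommMonoid M] (f : ℕ → M) (n : ℕ) :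
    ∏ l ∈ Finset.Icc 1 (n + 1), f l = f 1 * ∏ l ∈ Finset.Icc 1 n, f (l + 1) := by
  simp only [← Finset.Ico_add_one_right_eq_Icc, Finset.prod_Ico_eq_prod_range,
    Nat.add_sub_cancel, Finset.prod_range_succ']
  rw [mul_comm]
  simp only [add_zero, add_assoc]

namespace MeasureTheory

theorem withDensity_finsetSum {α ι : Type*} [MeasurableSpace α] (s : Finset ι)
    (μ : ι → Measure α) (f : α → ENNReal) :
    (∑ i ∈ s, μ i).withDensity f = ∑ i ∈ s, (μ i).withDensity f := by
  classical
  induction s using Finset.induction with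
  | empty => simp
  | insert a s has ih =>
    rw [Finset.sum_insert has, Finset.sum_insert has, withDensity_add_measure, ih]

noncomputable def momentMeasure (Q : Measure ℝ) (k : ℕ) : Measure ℝ :=
  Q.withDensity fun x => ENNReal.ofReal (x ^ k)

variable {Q : Measure ℝ}

theorem momentMeasure_zero : momentMeasure Q 0 = Q := by
  simp [momentMeasure]

theorem momentMeasure_withDensity_mul (hQ : ∀ᵐ x ∂Q, 0 ≤ x) {r : ℝ} (hr : 0 ≤ r) (k : ℕ) :
    (momentMeasure Q k).withDensity (fun x => ENNReal.ofReal (r * x))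
      = ENNReal.ofReal r • momentMeasure Q (k + 1) := by
  rw [momentMeasure, momentMeasure, ← withDensity_mul _ (by fun_prop) (by fun_prop),
    ← withDensity_smul _ (by fun_prop)]
  refine withDensity_congr_ae (hQ.mono fun x hx => ?_)
  simp only [Pi.mul_apply, Pi.smul_apply, smul_eq_mul]
  rw [← ENNReal.ofReal_mul (pow_nonneg hx k), ← ENNReal.ofReal_mul hr, pow_succ]
  ring_nf

theorem smul_withDensity_pow_div (A : ℝ) (k : ℕ) {m : ℝ} (hm : 0 < m) :
    ENNReal.ofReal (A * m) • Q.withDensity (fun x => ENNReal.ofReal (x ^ k / m))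
      = ENNReal.ofReal A • momentMeasure Q k := by
  have hdens : (fun x => ENNReal.ofReal (x ^ k / m))
      = ENNReal.ofReal m⁻¹ • fun x => ENNReal.ofReal (x ^ k) := by
    funext x
    rw [Pi.smul_apply, smul_eq_mul, ← ENNReal.ofReal_mul (inv_nonneg.2 hm.le), inv_mul_eq_div]
  rw [hdens, withDensity_smul' _ _ ENNReal.ofReal_ne_top, smul_smul,
    ← ENNReal.ofReal_mul' (inv_nonneg.2 hm.le), mul_inv_cancel_right₀ hm.ne', momentMeasure]

theorem dirac_add_sum_withDensity_mul (hQ : ∀ᵐ x ∂Q, 0 ≤ x) {h w : ℝ} (hh : 0 ≤ h) (hw : 0 ≤ w)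
    (a : ℝ) (c : ℕ → ℝ) (d : ℕ) :
    (ENNReal.ofReal a • Measure.dirac h
        + ∑ k ∈ Finset.range d, ENNReal.ofReal (c k) • momentMeasure Q k).withDensity
          (fun x => ENNReal.ofReal (w * x))
      = ENNReal.ofReal (w * h * a) • Measure.dirac h
        + ∑ k ∈ Finset.range d, ENNReal.ofReal (w * c k) • momentMeasure Q (k + 1) := by
  simp only [withDensity_add_measure, withDensity_finsetSum, withDensity_smul_measure,
    dirac_withDensity, momentMeasure_withDensity_mul hQ hw, smul_smul]
  rw [mul_comm, ← ENNReal.ofReal_mul (mul_nonneg hw hh)]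
  simp only [mul_comm _ (ENNReal.ofReal w), ← ENNReal.ofReal_mul hw]

theorem kingmanMap_eq_withDensity_mul_add (b : ℝ) (Q u : Measure ℝ) :
    kingmanMap b Q u
      = u.withDensity (fun x => ENNReal.ofReal ((1 - b) / (∫ y, y ∂u) * x))
        + ENNReal.ofReal b • momentMeasure Q 0 := by
  simp only [kingmanMap, momentMeasure_zero, mul_div_right_comm]

theorem kingmanMap_backward_expansion (hQ : ∀ᵐ x ∂Q, 0 ≤ x) {h : ℝ} (hh : 0 ≤ h) (n : ℕ)
    {b : ℕ → ℝ} {P : ℕ → Measure ℝ} (hPn : P n = Measure.dirac h)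
    (hP : ∀ j < n, P j = kingmanMap (b (j + 1)) Q (P (j + 1)))
    (hw : ∀ l ∈ Finset.Icc 1 n, 0 ≤ (1 - b l) / ∫ y, y ∂P l) :
    P 0 = ENNReal.ofReal (∏ l ∈ Finset.Icc 1 n, h * ((1 - b l) / ∫ y, y ∂P l))
          • Measure.dirac h
        + ∑ j ∈ Finset.range n,
            ENNReal.ofReal ((∏ l ∈ Finset.Icc 1 j, (1 - b l) / ∫ y, y ∂P l) * b (j + 1))
              • momentMeasure Q j := by
  -- `P 1, …, P (n + 1)` is the backward sequence of length `n` for the shifted rates `b (· + 1)`.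
  induction n generalizing b P with
  | zero => simp [hPn]
  | succ n ih =>
    have hP1 := ih (b := fun l => b (l + 1)) (P := fun j => P (j + 1)) hPn
      (fun j hj => hP (j + 1) (by omega))
      (fun l hl => hw (l + 1) (by simp at hl ⊢; omega))
    have hw1 := hw 1 (by simp)
    rw [hP 0 n.succ_pos, kingmanMap_eq_withDensity_mul_add, Finset.prod_Icc_one_succ,
      Finset.sum_range_succ']
    simp only [Finset.prod_Icc_one_succ, zero_add]
    generalize (1 - b 1) / ∫ y, y ∂P 1 = w at hw1 ⊢
    rw [hP1, dirac_add_sum_withDensity_mul hQ hh hw1]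
    simp only [Finset.Icc_eq_empty_of_lt one_pos, Finset.prod_empty, one_mul, mul_assoc]
    rw [mul_left_comm w h, add_assoc]

theorem smul_dirac_add_apply_self {α : Type*} [MeasurableSpace α] [MeasurableSingletonClass α]
    {a : α} (c : ENNReal) {ν : Measure α} (hν : ν {a} = 0) :
    (c • Measure.dirac a + ν) {a} = c := by
  simp [hν]

end MeasureTheory

theorem stmt_16_general (h : ℝ) (hh : h ∈ Set.Ioc (0:ℝ) 1)
    (Q : Measure ℝ)
    (hQsupp : Q (Set.Icc (0:ℝ) h)ᶜ = 0) (hQh : Q {h} = 0)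
    (hm : ∀ j : ℕ, 0 < ∫ x, x ^ j ∂Q)
    (b : ℕ → ℝ) (hb : ∀ j, b j ∈ Set.Ico (0:ℝ) 1)
    (Pb : ℕ → ℕ → Measure ℝ)
    (hfix : ∀ n, Pb n n = Measure.dirac h)
    (hrec : ∀ n, ∀ j < n, Pb n j = kingmanMap (b (j+1)) Q (Pb n (j+1)))
    (hmean : ∀ n, ∀ j ≤ n, 0 < ∫ y, y ∂Pb n j) :
    ∀ n, 1 ≤ n →
      (Pb n 0
          = ENNReal.ofReal (∏ l ∈ Finset.Icc 1 n, (h * (1 - b l) / ∫ y, y ∂Pb n l))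
              • Measure.dirac h
            + ∑ j ∈ Finset.range n,
                ENNReal.ofReal ((∏ l ∈ Finset.Icc 1 j, ((1 - b l) / ∫ y, y ∂Pb n l))
                    * b (j+1) * (∫ x, x ^ j ∂Q))
                  • Q.withDensity (fun x => ENNReal.ofReal (x ^ j / ∫ y, y ^ j ∂Q)))
        ∧ Pb n 0 {h}
            = ENNReal.ofReal (∏ l ∈ Finset.Icc 1 n, (h * (1 - b l) / ∫ y, y ∂Pb n l)) := by
  intro n _
  have hQ_nonneg : ∀ᵐ x ∂Q, 0 ≤ x := (ae_iff.2 hQsupp).mono fun x hx => hx.1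
  have hw : ∀ l ∈ Finset.Icc 1 n, 0 ≤ (1 - b l) / ∫ y, y ∂Pb n l := fun l hl =>
    div_nonneg (sub_nonneg.2 (hb l).2.le) (hmean n l (Finset.mem_Icc.1 hl).2).le
  have hexp := kingmanMap_backward_expansion hQ_nonneg hh.1.le n (hfix n) (hrec n) hw
  simp only [← mul_div_assoc] at hexp
  simp only [smul_withDensity_pow_div, hm]
  refine ⟨hexp, ?_⟩
  rw [hexp, smul_dirac_add_apply_self]
  simp only [Measure.finsetSum_apply, Measure.smul_apply, momentMeasure,
    withDensity_absolutelyContinuous Q _ hQh, smul_zero, Finset.sum_const_zero]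

theorem stmt_16 (h : ℝ) (hh : h ∈ Set.Ioc (0:ℝ) 1)
    (Q : Measure ℝ) (hQ : IsProbabilityMeasure Q)
    (hQsupp : Q (Set.Icc (0:ℝ) h)ᶜ = 0) (hQh : Q {h} = 0)
    (hm : ∀ j : ℕ, 0 < ∫ x, x ^ j ∂Q)
    (b : ℕ → ℝ) (hb : ∀ j, b j ∈ Set.Ico (0:ℝ) 1)
    (Pb : ℕ → ℕ → Measure ℝ)
    (hfix : ∀ n, Pb n n = Measure.dirac h)
    (hrec : ∀ n, ∀ j < n, Pb n j = kingmanMap (b (j+1)) Q (Pb n (j+1)))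
    (hmean : ∀ n, ∀ j ≤ n, 0 < ∫ y, y ∂Pb n j) :
    ∀ n, 1 ≤ n →
      (Pb n 0
          = ENNReal.ofReal (∏ l ∈ Finset.Icc 1 n, (h * (1 - b l) / ∫ y, y ∂Pb n l))
              • Measure.dirac h
            + ∑ j ∈ Finset.range n,
                ENNReal.ofReal ((∏ l ∈ Finset.Icc 1 j, ((1 - b l) / ∫ y, y ∂Pb n l))
                    * b (j+1) * (∫ x, x ^ j ∂Q))
                  • Q.withDensity (fun x => ENNReal.ofReal (x ^ j / ∫ y, y ^ j ∂Q)))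
        ∧ Pb n 0 {h}
            = ENNReal.ofReal (∏ l ∈ Finset.Icc 1 n, (h * (1 - b l) / ∫ y, y ∂Pb n l)) :=
  stmt_16_general h hh Q hQsupp hQh hm b hb Pb hfix hrec hmean
end
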